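/- arXiv:math/0206184 — 7 statements merged into one kernel-verified Lean document; each statement's English description precedes it below -/
import Mathlib

section
/- Let 0 ≤ m(0) < m(1) < ... < m(k) ≤ L be integers, ν ∈ {m(0),...,m(k)}, and f ∈ {0,...,L} with layer decomposition f(τ) = 1_{f ≥ τ} for τ = 1,...,L. Then |ν - f| = |m(0) - Σ_{τ=1}^{m(0)} f(τ)| + Σ_{l=1}^{k} |(m(l) - m(l-1))·1_{ν ≥ m(l)} - Σ_{τ=m(l-1)+1}^{m(l)} f(τ)| + Σ_{τ=m(k)+1}^{L} f(τ). -/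
open Finset

lemma sumInd (f a b : ℤ) (hf : 0 ≤ f) (ha : 0 ≤ a) (hab : a ≤ b) :
    ∑ τ ∈ Finset.Icc (a + 1) b, (if τ ≤ f then (1 : ℤ) else 0)
      = min b f - min a f := by
  rw [Finset.sum_boole]
  have hfil : (Finset.Icc (a + 1) b).filter (fun τ => τ ≤ f) = Finset.Icc (a + 1) (min b f) := by
    ext x; simp only [Finset.mem_filter, Finset.mem_Icc]; omega
  rw [hfil, Int.card_Icc]
  omega

lemma mstrict (k : ℕ) (m : ℕ → ℤ) (hmono : ∀ l, l < k → m l < m (l + 1)) :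
    ∀ a b : ℕ, a < b → b ≤ k → m a < m b := by
  intro a b
  induction b with
  | zero => omega
  | succ n ih =>
    intro hab hbk
    rcases Nat.lt_succ_iff_lt_or_eq.mp hab with h | h
    · exact lt_trans (ih h (by omega)) (hmono n (by omega))
    · rw [h]; exact hmono n (by omega)

lemma mmono (k : ℕ) (m : ℕ → ℤ) (hmono : ∀ l, l < k → m l < m (l + 1)) :
    ∀ a b : ℕ, a ≤ b → b ≤ k → m a ≤ m b := by
  intro a b hab hbk
  rcases eq_or_lt_of_le hab with h | h
  · subst h; exact le_refl _
  · exact le_of_lt (mstrict k m hmono a b h hbk)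

lemma tele (F G : ℕ → ℤ) : ∀ k j : ℕ, j ≤ k →
    ∑ l ∈ Finset.Icc 1 k, (if l ≤ j then F l - F (l - 1) else G l - G (l - 1))
      = (F j - F 0) + (G k - G j) := by
  intro k
  induction k with
  | zero => intro j hj; interval_cases j; simp
  | succ n ih =>
    intro j hj
    rw [Finset.sum_Icc_succ_top (by omega)]
    by_cases hjn : j ≤ n
    · rw [ih j hjn, if_neg (by omega)]
      simp only [Nat.add_sub_cancel]
      ring
    · have hj' : j = n + 1 := by omega
      subst hj'
      have hcongr : ∑ l ∈ Finset.Icc 1 n, (if l ≤ n + 1 then F l - F (l - 1) else G l - G (l - 1))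
          = ∑ l ∈ Finset.Icc 1 n, (if l ≤ n then F l - F (l - 1) else G l - G (l - 1)) := by
        apply Finset.sum_congr rfl
        intro x hx
        simp only [Finset.mem_Icc] at hx
        rw [if_pos (by omega), if_pos (by omega)]
      rw [hcongr, ih n le_rfl, if_pos le_rfl]
      simp only [Nat.add_sub_cancel]
      ring

/-- Decomposition of |ν − f| along the layer decomposition of f and the thresholds of ν. -/
theorem stmt3 (L : ℕ) (k : ℕ) (m : ℕ → ℤ) (h0 : 0 ≤ m 0) (hL : m k ≤ (L : ℤ))
    (hmono : ∀ l, l < k → m l < m (l + 1)) (ν f : ℤ)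
    (hν : ∃ j ≤ k, ν = m j) (hf0 : 0 ≤ f) (hfL : f ≤ (L : ℤ)) :
    |ν - f| =
      |m 0 - ∑ τ ∈ Finset.Icc (1 : ℤ) (m 0), (if τ ≤ f then (1 : ℤ) else 0)|
      + ∑ l ∈ Finset.Icc 1 k,
          |(m l - m (l - 1)) * (if m l ≤ ν then (1 : ℤ) else 0)
            - ∑ τ ∈ Finset.Icc (m (l - 1) + 1) (m l), (if τ ≤ f then (1 : ℤ) else 0)|
      + ∑ τ ∈ Finset.Icc (m k + 1) (L : ℤ), (if τ ≤ f then (1 : ℤ) else 0) := by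
  obtain ⟨j, hjk, rfl⟩ := hν
  have hmle := mmono k m hmono
  have hmlt := mstrict k m hmono
  have hm0k : m 0 ≤ m k := hmle 0 k (Nat.zero_le _) le_rfl
  -- first term
  have h1 : ∑ τ ∈ Finset.Icc (1 : ℤ) (m 0), (if τ ≤ f then (1 : ℤ) else 0)
      = min (m 0) f - min 0 f := by
    have := sumInd f 0 (m 0) hf0 le_rfl h0
    simpa using this
  -- last term
  have h3 : ∑ τ ∈ Finset.Icc (m k + 1) (L : ℤ), (if τ ≤ f then (1 : ℤ) else 0)
      = min (L : ℤ) f - min (m k) f :=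
    sumInd f (m k) (L : ℤ) hf0 (le_trans h0 hm0k) hL
  -- middle sum rewrite
  have h2 : ∑ l ∈ Finset.Icc 1 k,
      |(m l - m (l - 1)) * (if m l ≤ m j then (1 : ℤ) else 0)
        - ∑ τ ∈ Finset.Icc (m (l - 1) + 1) (m l), (if τ ≤ f then (1 : ℤ) else 0)|
      = ∑ l ∈ Finset.Icc 1 k,
          (if l ≤ j then (m l - min (m l) f) - (m (l - 1) - min (m (l - 1)) f)
           else (min (m l) f) - (min (m (l - 1)) f)) := by
    apply Finset.sum_congr rfl
    intro l hl
    simp only [Finset.mem_Icc] at hl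
    have hml : m (l - 1) ≤ m l := hmle (l - 1) l (by omega) hl.2
    have hm0l : m 0 ≤ m (l - 1) := hmle 0 (l - 1) (Nat.zero_le _) (by omega)
    rw [sumInd f (m (l - 1)) (m l) hf0 (le_trans h0 hm0l) hml]
    by_cases hlj : l ≤ j
    · have hle : m l ≤ m j := hmle l j hlj hjk
      rw [if_pos hle, if_pos hlj, mul_one]
      rw [abs_of_nonneg (by omega)]
      ring
    · have hlt : m j < m l := hmlt j l (by omega) hl.2
      rw [if_neg (by omega), if_neg hlj, mul_zero]
      rw [abs_of_nonpos (by omega)]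
      ring
  rw [h1, h2, h3, tele (fun l => m l - min (m l) f) (fun l => min (m l) f) k j hjk]
  have hmj : m 0 ≤ m j := hmle 0 j (Nat.zero_le _) hjk
  rcases le_or_gt f (m j) with h | h
  · rw [abs_of_nonneg (by omega), abs_of_nonneg (by omega)]; omega
  · rw [abs_of_nonpos (by omega), abs_of_nonneg (by omega)]; omega
end

section
/- Let u(l, b) = Σ_{i∈V} λᵢ |zᵢ(l) - bᵢ| + Σ_{(i,j)∈E} β_{i,j} |bᵢ - bⱼ| for Boolean vectors b ∈ {0,1}^V, with λᵢ, β_{i,j} ≥ 0 and z(1) ≥ z(2) ≥ ... ≥ z(k) (coordinatewise, with values in [0,1]). If b' minimizes u(l', ·) and b'' minimizes u(l'', ·) with l' < l'', then b' ∨ b'' minimizes u(l', ·) and b' ∧ b'' minimizes u(l'', ·). -/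
open Finset

/-- A Boolean vector has coordinates 0 or 1. -/
def IsBool {V : Type} (b : V → ℝ) : Prop := ∀ i, b i = 0 ∨ b i = 1

/-- The one-level energy u(l,b) with data z. -/
noncomputable def uEn {V : Type} [Fintype V] (lam : V → ℝ) (beta : V → V → ℝ)
    (z : V → ℝ) (b : V → ℝ) : ℝ :=
  ∑ i, lam i * |z i - b i| + ∑ i, ∑ j, beta i j * |b i - b j|

/-- b minimizes u(·) over Boolean vectors. -/
def Minimizes {V : Type} [Fintype V] (lam : V → ℝ) (beta : V → V → ℝ)
    (z : V → ℝ) (b : V → ℝ) : Prop :=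
  IsBool b ∧ ∀ b' : V → ℝ, IsBool b' → uEn lam beta z b ≤ uEn lam beta z b'

lemma data_exchange (zp zq a b : ℝ) (hp0 : 0 ≤ zp) (hp1 : zp ≤ 1)
    (hq0 : 0 ≤ zq) (hq1 : zq ≤ 1) (hqp : zq ≤ zp)
    (ha : a = 0 ∨ a = 1) (hb : b = 0 ∨ b = 1) :
    |zp - max a b| + |zq - min a b| ≤ |zp - a| + |zq - b| := by
  rcases ha with rfl | rfl <;> rcases hb with rfl | rfl <;> norm_num
  rw [abs_of_nonpos (by linarith : zp - 1 ≤ 0), abs_of_nonneg hq0,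
    abs_of_nonneg hp0, abs_of_nonpos (by linarith : zq - 1 ≤ 0)]
  linarith

lemma smooth_exchange (a b c d : ℝ) :
    |max a c - max b d| + |min a c - min b d| ≤ |a - b| + |c - d| := by
  rcases le_total a c with h | h <;> rcases le_total b d with h' | h' <;>
    simp only [max_eq_right h, max_eq_left h, max_eq_right h', max_eq_left h',
      min_eq_left h, min_eq_right h, min_eq_left h', min_eq_right h'] <;>
    [linarith [abs_sub_comm a b, abs_sub_comm c d]; skip; skip;
      linarith [abs_sub_comm a b, abs_sub_comm c d]] <;>
  · rcases abs_cases (a - b) with ⟨e1, f1⟩ | ⟨e1, f1⟩ <;>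
      rcases abs_cases (c - d) with ⟨e2, f2⟩ | ⟨e2, f2⟩ <;>
      rcases abs_cases (a - d) with ⟨e3, f3⟩ | ⟨e3, f3⟩ <;>
      rcases abs_cases (c - b) with ⟨e4, f4⟩ | ⟨e4, f4⟩ <;>
      linarith

/-- Monotone exchange property of minimizers of u(l',·) and u(l'',·). -/
theorem stmt6 {V : Type} [Fintype V] (k : ℕ) (lam : V → ℝ) (hlam : ∀ i, 0 ≤ lam i)
    (beta : V → V → ℝ) (hbeta : ∀ i j, 0 ≤ beta i j) (z : ℕ → V → ℝ)
    (hz01 : ∀ l, 1 ≤ l → l ≤ k → ∀ i, 0 ≤ z l i ∧ z l i ≤ 1)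
    (hzmono : ∀ l l', 1 ≤ l → l ≤ l' → l' ≤ k → ∀ i, z l' i ≤ z l i)
    (l' l'' : ℕ) (h1 : 1 ≤ l') (h2 : l' < l'') (h3 : l'' ≤ k)
    (b' b'' : V → ℝ)
    (hb' : Minimizes lam beta (z l') b') (hb'' : Minimizes lam beta (z l'') b'') :
    Minimizes lam beta (z l') (fun i => max (b' i) (b'' i)) ∧
    Minimizes lam beta (z l'') (fun i => min (b' i) (b'' i)) := by
  have hzp := hz01 l' h1 (le_trans (le_of_lt h2) h3)
  have hzq := hz01 l'' (le_trans h1 (le_of_lt h2)) h3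
  have hqp := hzmono l' l'' h1 (le_of_lt h2) h3
  set m1 : V → ℝ := fun i => max (b' i) (b'' i) with hm1
  set m2 : V → ℝ := fun i => min (b' i) (b'' i) with hm2
  have hbm1 : IsBool m1 := by
    intro i
    rcases hb'.1 i with h | h <;> rcases hb''.1 i with h' | h' <;>
      simp [hm1, h, h']
  have hbm2 : IsBool m2 := by
    intro i
    rcases hb'.1 i with h | h <;> rcases hb''.1 i with h' | h' <;>
      simp [hm2, h, h']
  have key : uEn lam beta (z l') m1 + uEn lam beta (z l'') m2 ≤
      uEn lam beta (z l') b' + uEn lam beta (z l'') b'' := by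
    unfold uEn
    have hA : ∑ i, lam i * |z l' i - m1 i| + ∑ i, lam i * |z l'' i - m2 i| ≤
        ∑ i, lam i * |z l' i - b' i| + ∑ i, lam i * |z l'' i - b'' i| := by
      rw [← Finset.sum_add_distrib, ← Finset.sum_add_distrib]
      apply Finset.sum_le_sum
      intro i _
      rw [← mul_add, ← mul_add]
      apply mul_le_mul_of_nonneg_left _ (hlam i)
      exact data_exchange _ _ _ _ (hzp i).1 (hzp i).2 (hzq i).1 (hzq i).2
        (hqp i) (hb'.1 i) (hb''.1 i)
    have hB : ∑ i, ∑ j, beta i j * |m1 i - m1 j| +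
        ∑ i, ∑ j, beta i j * |m2 i - m2 j| ≤
        ∑ i, ∑ j, beta i j * |b' i - b' j| +
        ∑ i, ∑ j, beta i j * |b'' i - b'' j| := by
      rw [← Finset.sum_add_distrib, ← Finset.sum_add_distrib]
      apply Finset.sum_le_sum
      intro i _
      rw [← Finset.sum_add_distrib, ← Finset.sum_add_distrib]
      apply Finset.sum_le_sum
      intro j _
      rw [← mul_add, ← mul_add]
      exact mul_le_mul_of_nonneg_left (smooth_exchange _ _ _ _) (hbeta i j)
    linarith
  have hle1 := hb'.2 m1 hbm1
  have hle2 := hb''.2 m2 hbm2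
  constructor
  · exact ⟨hbm1, fun c hc => le_trans (by linarith) (hb'.2 c hc)⟩
  · exact ⟨hbm2, fun c hc => le_trans (by linarith) (hb''.2 c hc)⟩
end

section
/- With u(l,·) as in the monotone exchange setting (z(1) ≥ ... ≥ z(k) coordinatewise, λᵢ ≥ 0, β_{i,j} ≥ 0), there exists a non-increasing sequence x̌(1) ≥ x̌(2) ≥ ... ≥ x̌(k) of Boolean vectors such that for each l, x̌(l) minimizes u(l,·) over {0,1}^V. -/
open Finset

lemma exists_min {V : Type} [Fintype V] (lam : V → ℝ) (beta : V → V → ℝ)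
    (z : V → ℝ) : ∃ b, Minimizes lam beta z b := by
  classical
  set F : (V → Bool) → (V → ℝ) := fun c i => if c i then 1 else 0 with hF
  obtain ⟨c, -, hc⟩ := Finset.exists_min_image (Finset.univ : Finset (V → Bool))
    (fun c => uEn lam beta z (F c)) ⟨fun _ => true, Finset.mem_univ _⟩
  refine ⟨F c, fun i => ?_, fun b' hb' => ?_⟩
  · by_cases h : c i <;> simp [hF, h]
  · have hrep : F (fun i => if b' i = 1 then true else false) = b' := by
      funext i
      rcases hb' i with h | h <;> simp [hF, h]
    have := hc (fun i => if b' i = 1 then true else false) (Finset.mem_univ _)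
    rwa [hrep] at this

lemma data_term (zi z'i a b : ℝ) (hz : z'i ≤ zi) (hz0 : 0 ≤ z'i) (hz1 : zi ≤ 1)
    (ha : a = 0 ∨ a = 1) (hb : b = 0 ∨ b = 1) :
    |zi - max a b| + |z'i - min a b| ≤ |zi - a| + |z'i - b| := by
  rcases ha with rfl | rfl <;> rcases hb with rfl | rfl <;> simp
  · rw [abs_of_nonpos (by linarith), abs_of_nonneg (by linarith),
      abs_of_nonneg (by linarith), abs_of_nonpos (by linarith)]
    linarith

lemma cut_term (ai aj bi bj : ℝ) (hai : ai = 0 ∨ ai = 1) (haj : aj = 0 ∨ aj = 1)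
    (hbi : bi = 0 ∨ bi = 1) (hbj : bj = 0 ∨ bj = 1) :
    |max ai bi - max aj bj| + |min ai bi - min aj bj| ≤ |ai - aj| + |bi - bj| := by
  rcases hai with rfl | rfl <;> rcases haj with rfl | rfl <;>
    rcases hbi with rfl | rfl <;> rcases hbj with rfl | rfl <;> norm_num

lemma exchange {V : Type} [Fintype V] (lam : V → ℝ) (hlam : ∀ i, 0 ≤ lam i)
    (beta : V → V → ℝ) (hbeta : ∀ i j, 0 ≤ beta i j) (zz zz' : V → ℝ)
    (hz : ∀ i, zz' i ≤ zz i) (hz0 : ∀ i, 0 ≤ zz' i) (hz1 : ∀ i, zz i ≤ 1)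
    (a b : V → ℝ) (ha : IsBool a) (hb : IsBool b) :
    uEn lam beta zz (fun i => max (a i) (b i)) + uEn lam beta zz' (fun i => min (a i) (b i))
      ≤ uEn lam beta zz a + uEn lam beta zz' b := by
  unfold uEn
  have hdata : ∑ i, lam i * |zz i - max (a i) (b i)| + ∑ i, lam i * |zz' i - min (a i) (b i)|
      ≤ ∑ i, lam i * |zz i - a i| + ∑ i, lam i * |zz' i - b i| := by
    rw [← Finset.sum_add_distrib, ← Finset.sum_add_distrib]
    refine Finset.sum_le_sum fun i _ => ?_
    rw [← mul_add, ← mul_add]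
    exact mul_le_mul_of_nonneg_left
      (data_term _ _ _ _ (hz i) (hz0 i) (hz1 i) (ha i) (hb i)) (hlam i)
  have hcut : (∑ i, ∑ j, beta i j * |max (a i) (b i) - max (a j) (b j)|)
      + ∑ i, ∑ j, beta i j * |min (a i) (b i) - min (a j) (b j)|
      ≤ (∑ i, ∑ j, beta i j * |a i - a j|) + ∑ i, ∑ j, beta i j * |b i - b j| := by
    rw [← Finset.sum_add_distrib, ← Finset.sum_add_distrib]
    refine Finset.sum_le_sum fun i _ => ?_
    rw [← Finset.sum_add_distrib, ← Finset.sum_add_distrib]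
    refine Finset.sum_le_sum fun j _ => ?_
    rw [← mul_add, ← mul_add]
    exact mul_le_mul_of_nonneg_left
      (cut_term _ _ _ _ (ha i) (ha j) (hb i) (hb j)) (hbeta i j)
  linarith

noncomputable def xseq {V : Type} (m : ℕ → V → ℝ) : ℕ → V → ℝ
  | 0 => fun _ => 1
  | (n+1) => fun i => min (m (n+1) i) (xseq m n i)

/-- There exists a coordinatewise non-increasing sequence of minimizers of u(l,·). -/
theorem stmt7 {V : Type} [Fintype V] (k : ℕ) (lam : V → ℝ) (hlam : ∀ i, 0 ≤ lam i)
    (beta : V → V → ℝ) (hbeta : ∀ i j, 0 ≤ beta i j) (z : ℕ → V → ℝ)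
    (hz01 : ∀ l, 1 ≤ l → l ≤ k → ∀ i, 0 ≤ z l i ∧ z l i ≤ 1)
    (hzmono : ∀ l l', 1 ≤ l → l ≤ l' → l' ≤ k → ∀ i, z l' i ≤ z l i) :
    ∃ x : ℕ → V → ℝ,
      (∀ l, 1 ≤ l → l ≤ k → Minimizes lam beta (z l) (x l)) ∧
      (∀ l l', 1 ≤ l → l ≤ l' → l' ≤ k → ∀ i, x l' i ≤ x l i) := by
  classical
  choose m hm using fun l => exists_min lam beta (z l)
  set x : ℕ → V → ℝ := xseq m with hxdef
  have hstep : ∀ n i, x (n+1) i = min (m (n+1) i) (x n i) := fun n i => rfl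
  have hmono1 : ∀ n i, x (n+1) i ≤ x n i := fun n i => min_le_right _ _
  have hmono : ∀ l l', l ≤ l' → ∀ i, x l' i ≤ x l i := by
    intro l l' h i
    induction h with
    | refl => exact le_refl _
    | step h ih => exact le_trans (hmono1 _ i) ih
  have key : ∀ l, 1 ≤ l → l ≤ k → Minimizes lam beta (z l) (x l) := by
    intro l
    induction l with
    | zero => intro h; omega
    | succ n ih =>
      intro _ hlk
      rcases Nat.eq_zero_or_pos n with rfl | hn
      · have hx1 : x 1 = m 1 := by
          funext i
          have hle : m 1 i ≤ 1 := by rcases (hm 1).1 i with h | h <;> simp [h]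
          rw [hstep]
          show min (m 1 i) 1 = m 1 i
          exact min_eq_left hle
        rw [hx1]; exact hm 1
      · have hIH := ih hn (le_trans (Nat.le_succ n) hlk)
        have hbool_x : IsBool (x n) := hIH.1
        have hbool_m := (hm (n+1)).1
        have hex := exchange lam hlam beta hbeta (z n) (z (n+1))
          (fun i => hzmono n (n+1) hn (Nat.le_succ n) hlk i)
          (fun i => (hz01 (n+1) (by omega) hlk i).1)
          (fun i => (hz01 n hn (by omega) i).2)
          (x n) (m (n+1)) hbool_x hbool_m
        have hsup_bool : IsBool (fun i => max (x n i) (m (n+1) i)) := by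
          intro i
          rcases hbool_x i with h | h <;> rcases hbool_m i with h' | h' <;>
            simp [h, h']
        have h1 : uEn lam beta (z n) (x n)
            ≤ uEn lam beta (z n) (fun i => max (x n i) (m (n+1) i)) :=
          hIH.2 _ hsup_bool
        have hx_eq : x (n+1) = fun i => min (x n i) (m (n+1) i) := by
          funext i; rw [hstep]; exact min_comm _ _
        constructor
        · intro i
          rw [hstep]
          rcases hbool_x i with h | h <;> rcases hbool_m i with h' | h' <;>
            simp [h, h']
        · intro b' hb'
          have h2 : uEn lam beta (z (n+1)) (x (n+1))
              ≤ uEn lam beta (z (n+1)) (m (n+1)) := by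
            rw [hx_eq]; linarith
          exact le_trans h2 ((hm (n+1)).2 b' hb')
  exact ⟨x, key, fun l l' h1 h2 h3 i => hmono l l' h2 i⟩
end

section
/- In the same setting with z(1) ≥ ... ≥ z(k) coordinatewise, the minimal minimizers are ordered: x̲(1) ≥ x̲(2) ≥ ... ≥ x̲(k), and likewise the maximal minimizers satisfy x̄(1) ≥ x̄(2) ≥ ... ≥ x̄(k). -/
open Finset

lemma lin_ineq {z' z'' a b : ℝ} (h0' : 0 ≤ z') (h1' : z' ≤ 1) (h0'' : 0 ≤ z'')
    (h1'' : z'' ≤ 1) (hle : z'' ≤ z') (ha : a = 0 ∨ a = 1) (hb : b = 0 ∨ b = 1) :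
    |z' - max a b| + |z'' - min a b| ≤ |z' - a| + |z'' - b| := by
  have e0' : |z' - 0| = z' := by rw [sub_zero, abs_of_nonneg h0']
  have e1' : |z' - 1| = 1 - z' := by rw [abs_of_nonpos (by linarith), neg_sub]
  have e0'' : |z'' - 0| = z'' := by rw [sub_zero, abs_of_nonneg h0'']
  have e1'' : |z'' - 1| = 1 - z'' := by rw [abs_of_nonpos (by linarith), neg_sub]
  rcases ha with rfl | rfl <;> rcases hb with rfl | rfl
  · norm_num
  · rw [show max (0:ℝ) 1 = 1 by norm_num, show min (0:ℝ) 1 = 0 by norm_num,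
      e1', e0'', e0', e1'']
    linarith
  · norm_num
  · norm_num

lemma cut_ineq {a b a' b' : ℝ} (ha : a = 0 ∨ a = 1) (hb : b = 0 ∨ b = 1)
    (ha' : a' = 0 ∨ a' = 1) (hb' : b' = 0 ∨ b' = 1) :
    |max a a' - max b b'| + |min a a' - min b b'| ≤ |a - b| + |a' - b'| := by
  rcases ha with rfl | rfl <;> rcases hb with rfl | rfl <;>
    rcases ha' with rfl | rfl <;> rcases hb' with rfl | rfl <;> norm_num

lemma key {V : Type} [Fintype V] (lam : V → ℝ) (hlam : ∀ i, 0 ≤ lam i)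
    (beta : V → V → ℝ) (hbeta : ∀ i j, 0 ≤ beta i j) (z' z'' : V → ℝ)
    (hz' : ∀ i, 0 ≤ z' i ∧ z' i ≤ 1) (hz'' : ∀ i, 0 ≤ z'' i ∧ z'' i ≤ 1)
    (hle : ∀ i, z'' i ≤ z' i) (b' b'' : V → ℝ) (hb' : IsBool b') (hb'' : IsBool b'') :
    uEn lam beta z' (fun i => max (b' i) (b'' i)) +
      uEn lam beta z'' (fun i => min (b' i) (b'' i)) ≤
    uEn lam beta z' b' + uEn lam beta z'' b'' := by
  unfold uEn
  have h1 : (∑ i, lam i * |z' i - max (b' i) (b'' i)|) +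
      (∑ i, lam i * |z'' i - min (b' i) (b'' i)|) ≤
      (∑ i, lam i * |z' i - b' i|) + (∑ i, lam i * |z'' i - b'' i|) := by
    rw [← Finset.sum_add_distrib, ← Finset.sum_add_distrib]
    apply Finset.sum_le_sum
    intro i _
    have h := lin_ineq (hz' i).1 (hz' i).2 (hz'' i).1 (hz'' i).2 (hle i) (hb' i) (hb'' i)
    nlinarith [hlam i]
  have h2 : (∑ i, ∑ j, beta i j * |max (b' i) (b'' i) - max (b' j) (b'' j)|) +
      (∑ i, ∑ j, beta i j * |min (b' i) (b'' i) - min (b' j) (b'' j)|) ≤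
      (∑ i, ∑ j, beta i j * |b' i - b' j|) + (∑ i, ∑ j, beta i j * |b'' i - b'' j|) := by
    rw [← Finset.sum_add_distrib, ← Finset.sum_add_distrib]
    apply Finset.sum_le_sum
    intro i _
    rw [← Finset.sum_add_distrib, ← Finset.sum_add_distrib]
    apply Finset.sum_le_sum
    intro j _
    have h := cut_ineq (hb' i) (hb' j) (hb'' i) (hb'' j)
    nlinarith [hbeta i j]
  linarith

lemma isBool_max {V : Type} {b b' : V → ℝ} (h : IsBool b) (h' : IsBool b') :
    IsBool (fun i => max (b i) (b' i)) := by
  intro i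
  dsimp only
  rcases h i with e | e <;> rcases h' i with e' | e' <;> rw [e, e'] <;> norm_num

lemma isBool_min {V : Type} {b b' : V → ℝ} (h : IsBool b) (h' : IsBool b') :
    IsBool (fun i => min (b i) (b' i)) := by
  intro i
  dsimp only
  rcases h i with e | e <;> rcases h' i with e' | e' <;> rw [e, e'] <;> norm_num

/-- The minimal minimizers of u(l,·) are ordered in l, and likewise the maximal minimizers. -/
theorem stmt10 {V : Type} [Fintype V] (k : ℕ) (lam : V → ℝ) (hlam : ∀ i, 0 ≤ lam i)
    (beta : V → V → ℝ) (hbeta : ∀ i j, 0 ≤ beta i j) (z : ℕ → V → ℝ)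
    (hz01 : ∀ l, 1 ≤ l → l ≤ k → ∀ i, 0 ≤ z l i ∧ z l i ≤ 1)
    (hzmono : ∀ l l', 1 ≤ l → l ≤ l' → l' ≤ k → ∀ i, z l' i ≤ z l i)
    (l' l'' : ℕ) (h1 : 1 ≤ l') (h2 : l' ≤ l'') (h3 : l'' ≤ k) :
    (∀ lo' lo'' : V → ℝ,
      (Minimizes lam beta (z l') lo' ∧
        ∀ b, Minimizes lam beta (z l') b → ∀ i, lo' i ≤ b i) →
      (Minimizes lam beta (z l'') lo'' ∧
        ∀ b, Minimizes lam beta (z l'') b → ∀ i, lo'' i ≤ b i) →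
      ∀ i, lo'' i ≤ lo' i) ∧
    (∀ hi' hi'' : V → ℝ,
      (Minimizes lam beta (z l') hi' ∧
        ∀ b, Minimizes lam beta (z l') b → ∀ i, b i ≤ hi' i) →
      (Minimizes lam beta (z l'') hi'' ∧
        ∀ b, Minimizes lam beta (z l'') b → ∀ i, b i ≤ hi'' i) →
      ∀ i, hi'' i ≤ hi' i) := by
  have h1'' : 1 ≤ l'' := le_trans h1 h2
  have hz' := hz01 l' h1 (le_trans h2 h3)
  have hz'' := hz01 l'' h1'' h3
  have hle := hzmono l' l'' h1 h2 h3
  constructor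
  · rintro lo' lo'' ⟨⟨hbl', hml'⟩, _⟩ ⟨⟨hbl'', hml''⟩, hlemin⟩ i
    set M : V → ℝ := fun i => max (lo' i) (lo'' i) with hM
    set m : V → ℝ := fun i => min (lo' i) (lo'' i) with hm
    have hbM := isBool_max hbl' hbl''
    have hbm := isBool_min hbl' hbl''
    have hk := key lam hlam beta hbeta (z l') (z l'') hz' hz'' hle lo' lo'' hbl' hbl''
    have hM' : uEn lam beta (z l') lo' ≤ uEn lam beta (z l') M := hml' M hbM
    have hmmin : Minimizes lam beta (z l'') m := by
      refine ⟨hbm, fun b hb => ?_⟩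
      have : uEn lam beta (z l'') m ≤ uEn lam beta (z l'') lo'' := by linarith
      exact le_trans this (hml'' b hb)
    have := hlemin m hmmin i
    calc lo'' i ≤ m i := this
      _ ≤ lo' i := min_le_left _ _
  · rintro hi' hi'' ⟨⟨hbh', hmh'⟩, hlemax'⟩ ⟨⟨hbh'', hmh''⟩, _⟩ i
    set M : V → ℝ := fun i => max (hi' i) (hi'' i) with hM
    have hbM := isBool_max hbh' hbh''
    have hbm := isBool_min hbh' hbh''
    have hk := key lam hlam beta hbeta (z l') (z l'') hz' hz'' hle hi' hi'' hbh' hbh''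
    have hm'' : uEn lam beta (z l'') hi'' ≤
        uEn lam beta (z l'') (fun i => min (hi' i) (hi'' i)) := hmh'' _ hbm
    have hMmin : Minimizes lam beta (z l') M := by
      refine ⟨hbM, fun b hb => ?_⟩
      have : uEn lam beta (z l') M ≤ uEn lam beta (z l') hi' := by linarith
      exact le_trans this (hmh' b hb)
    have := hlemax' M hMmin i
    calc hi'' i ≤ M i := le_max_right _ _
      _ ≤ hi' i := this
end

section
/- Decomposition of the exponential energy: for any label vector m ∈ M^V with M = {m(0),...,m(k)} ⊆ {0,...,L}, writing x(l) ∈ {0,1}^V for the vector with coordinates xᵢ(l) = 1_{mᵢ ≥ m(l)}, and zᵢ(l) = (1/(m(l)-m(l-1))) Σ_{τ=m(l-1)+1}^{m(l)} fᵢ(τ) with fᵢ(τ) = 1_{fᵢ ≥ τ}, the identity U₁(m) = C + Σ_{l=1}^{k} (m(l) - m(l-1)) · u(l, x(l)) holds, where U₁(m) = Σᵢ λᵢ|fᵢ - mᵢ| + Σ_{(i,j)} β_{i,j}|mᵢ - mⱼ|, u(l,b) = Σᵢ λᵢ|zᵢ(l) - bᵢ| + Σ_{(i,j)} β_{i,j}|bᵢ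 - bⱼ|, and C = Σᵢ λᵢ(|m(0) - Σ_{τ=1}^{m(0)} fᵢ(τ)| + Σ_{τ=m(k)+1}^{L} fᵢ(τ)) is independent of m. -/
open Finset

lemma myIcc (a b : ℤ) : Finset.Icc (a+1) b = Finset.Ioc a b := by
  ext x; simp [Int.add_one_le_iff]

lemma key_le (a b lo hi : ℤ) (hab : a ≤ b) (h1 : lo ≤ a) (h2 : b ≤ hi) :
    ∑ τ ∈ Finset.Ioc lo hi,
      |(if τ ≤ a then (1:ℝ) else 0) - (if τ ≤ b then (1:ℝ) else 0)| = (b : ℝ) - a := by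
  have h : ∀ τ ∈ Finset.Ioc lo hi,
      |(if τ ≤ a then (1:ℝ) else 0) - (if τ ≤ b then (1:ℝ) else 0)|
        = (if a < τ ∧ τ ≤ b then (1:ℝ) else 0) := by
    intro τ _
    rcases le_or_gt τ a with hA | hA
    · have hB : τ ≤ b := hA.trans hab
      simp [hA, hB, not_lt.2 hA]
    · rcases le_or_gt τ b with hB | hB
      · simp [not_le.2 hA, hB, hA]
      · simp [not_le.2 hA, not_le.2 hB]
  rw [Finset.sum_congr rfl h, Finset.sum_boole]
  have h2 : (Finset.Ioc lo hi).filter (fun τ => a < τ ∧ τ ≤ b) = Finset.Ioc a b := by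
    ext τ; simp; omega
  rw [h2, Int.card_Ioc]
  have h3 : ((b - a).toNat : ℤ) = b - a := Int.toNat_of_nonneg (by omega)
  exact_mod_cast h3

lemma key1 (a b lo hi : ℤ) (h1 : lo ≤ a) (h2 : a ≤ hi) (h3 : lo ≤ b) (h4 : b ≤ hi) :
    |(a : ℝ) - b| = ∑ τ ∈ Finset.Ioc lo hi,
      |(if τ ≤ a then (1:ℝ) else 0) - (if τ ≤ b then (1:ℝ) else 0)| := by
  rcases le_total a b with hab | hab
  · rw [key_le a b lo hi hab h1 h4,
      abs_of_nonpos (sub_nonpos.2 (show (a:ℝ) ≤ b by exact_mod_cast hab))]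
    ring
  · have := key_le b a lo hi hab h3 h2
    rw [abs_of_nonneg (sub_nonneg.2 (show (b:ℝ) ≤ a by exact_mod_cast hab)), ← this]
    exact Finset.sum_congr rfl fun τ _ => abs_sub_comm _ _


lemma mymono (m : ℕ → ℤ) (k : ℕ) (hmono : ∀ l, l < k → m l < m (l + 1)) :
    ∀ p q, p ≤ q → q ≤ k → m p ≤ m q := by
  intro p q hpq hq
  induction q with
  | zero =>
    have hp : p = 0 := by omega
    simp [hp]
  | succ n ih =>
    rcases Nat.lt_or_ge p (n+1) with h | h
    · exact (ih (by omega) (by omega)).trans (hmono n (by omega)).le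
    · have : p = n + 1 := by omega
      simp [this]

lemma mysum_consec (g : ℤ → ℝ) {a b c : ℤ} (hab : a ≤ b) (hbc : b ≤ c) :
    ∑ τ ∈ Finset.Ioc a b, g τ + ∑ τ ∈ Finset.Ioc b c, g τ = ∑ τ ∈ Finset.Ioc a c, g τ := by
  rw [← Finset.sum_union (Finset.disjoint_left.2 (by
      intro x hx hx'
      simp only [Finset.mem_Ioc] at hx hx'
      omega)),
    Finset.Ioc_union_Ioc_eq_Ioc hab hbc]

lemma telescope (m : ℕ → ℤ) (g : ℤ → ℝ) :
    ∀ K, (∀ l, l < K → m l < m (l + 1)) →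
      ∑ τ ∈ Finset.Ioc (m 0) (m K), g τ
        = ∑ l ∈ Finset.Icc 1 K, ∑ τ ∈ Finset.Ioc (m (l - 1)) (m l), g τ := by
  intro K
  induction K with
  | zero => simp
  | succ K ih =>
    intro hmono
    rw [Finset.sum_Icc_succ_top (Nat.succ_le_succ (Nat.zero_le K)),
      ← ih (fun l hl => hmono l (by omega))]
    simp only [Nat.add_sub_cancel]
    exact (mysum_consec g (mymono m (K+1) hmono 0 K (by omega) (by omega))
        (hmono K (by omega)).le).symm

lemma blockconst (m : ℕ → ℤ) (k : ℕ) (hmono : ∀ l, l < k → m l < m (l + 1))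
    (l : ℕ) (hl : 1 ≤ l) (hlk : l ≤ k) (c : ℤ) (j : ℕ) (hj : j ≤ k) (hc : c = m j)
    (τ : ℤ) (hτ : τ ∈ Finset.Ioc (m (l - 1)) (m l)) :
    (if τ ≤ c then (1:ℝ) else 0) = (if m l ≤ c then (1:ℝ) else 0) := by
  simp only [Finset.mem_Ioc] at hτ
  by_cases h : m l ≤ c
  · simp [h, hτ.2.trans h]
  · have hcl : c ≤ m (l - 1) := by
      subst hc
      by_contra hcon
      push_neg at hcon
      have hjl : l ≤ j := by
        by_contra hjl
        push_neg at hjl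
        exact absurd (mymono m k hmono j (l-1) (by omega) (by omega)) (not_le.2 hcon)
      exact h (mymono m k hmono l j hjl hj)
    simp [h, not_le.2 (lt_of_le_of_lt hcl hτ.1)]

lemma blockabs (lo hi : ℤ) (hlt : lo < hi) (a : ℤ) (x : ℝ) (hx : x = 0 ∨ x = 1) :
    ((hi:ℝ) - lo) * |(1/((hi:ℝ) - lo)) * (∑ τ ∈ Finset.Ioc lo hi, (if τ ≤ a then (1:ℝ) else 0)) - x|
      = ∑ τ ∈ Finset.Ioc lo hi, |(if τ ≤ a then (1:ℝ) else 0) - x| := by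
  have hd : (0:ℝ) < (hi:ℝ) - lo := by
    have : (lo:ℝ) < hi := by exact_mod_cast hlt
    linarith
  set S : ℝ := ∑ τ ∈ Finset.Ioc lo hi, (if τ ≤ a then (1:ℝ) else 0) with hS
  have hcard : ((Finset.Ioc lo hi).card : ℝ) = (hi:ℝ) - lo := by
    rw [Int.card_Ioc]
    exact_mod_cast Int.toNat_of_nonneg (by omega)
  have hS0 : 0 ≤ S := Finset.sum_nonneg (fun τ _ => by positivity)
  have hS1 : S ≤ (hi:ℝ) - lo := by
    rw [← hcard]
    calc S ≤ ∑ τ ∈ Finset.Ioc lo hi, (1:ℝ) :=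
      Finset.sum_le_sum (fun τ _ => by split <;> norm_num)
    _ = _ := by simp
  have lhs : ((hi:ℝ) - lo) * |(1/((hi:ℝ) - lo)) * S - x| = |S - ((hi:ℝ) - lo) * x| := by
    have h4 : (1/((hi:ℝ) - lo)) * S - x = (S - ((hi:ℝ) - lo) * x) / ((hi:ℝ) - lo) := by
      field_simp
    rw [h4, abs_div, abs_of_pos hd]
    field_simp
  rw [lhs]
  rcases hx with hx | hx
  · subst hx
    rw [mul_zero, sub_zero, abs_of_nonneg hS0]
    exact Finset.sum_congr rfl (fun τ _ => by rw [sub_zero, abs_of_nonneg (by positivity)])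
  · subst hx
    rw [mul_one, abs_of_nonpos (by linarith)]
    have : ∀ τ ∈ Finset.Ioc lo hi, |(if τ ≤ a then (1:ℝ) else 0) - 1|
        = 1 - (if τ ≤ a then (1:ℝ) else 0) := by
      intro τ _
      rw [abs_of_nonpos (by split <;> norm_num)]
      ring
    rw [Finset.sum_congr rfl this, Finset.sum_sub_distrib, ← hS, Finset.sum_const,
      nsmul_eq_mul, mul_one, hcard]
    ring

lemma dataterm (L k : ℕ) (m : ℕ → ℤ) (h0 : 0 ≤ m 0) (hL : m k ≤ (L:ℤ))
    (hmono : ∀ l, l < k → m l < m (l + 1)) (a c : ℤ) (ha0 : 0 ≤ a) (haL : a ≤ (L:ℤ))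
    (j : ℕ) (hj : j ≤ k) (hc : c = m j) :
    |(a:ℝ) - c| =
      (|(m 0 : ℝ) - ∑ τ ∈ Finset.Icc (1:ℤ) (m 0), (if τ ≤ a then (1:ℝ) else 0)|
        + ∑ τ ∈ Finset.Icc (m k + 1) (L:ℤ), (if τ ≤ a then (1:ℝ) else 0))
      + ∑ l ∈ Finset.Icc 1 k, ((m l : ℝ) - (m (l-1) : ℝ)) *
          |(1/((m l : ℝ) - (m (l-1) : ℝ))) *
              (∑ τ ∈ Finset.Icc (m (l-1) + 1) (m l), (if τ ≤ a then (1:ℝ) else 0))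
            - (if m l ≤ c then (1:ℝ) else 0)| := by
  have hm0c : m 0 ≤ c := hc ▸ mymono m k hmono 0 j (Nat.zero_le _) hj
  have hck : c ≤ m k := hc ▸ mymono m k hmono j k hj le_rfl
  have h0k : m 0 ≤ m k := mymono m k hmono 0 k (Nat.zero_le _) le_rfl
  rw [key1 a c 0 (L:ℤ) ha0 haL (h0.trans hm0c) (hck.trans hL)]
  rw [← mysum_consec _ (show (0:ℤ) ≤ m k from h0.trans h0k) hL,
    ← mysum_consec _ (show (0:ℤ) ≤ m 0 from h0) h0k]
  -- piece 1
  have hp1 : ∑ τ ∈ Finset.Ioc 0 (m 0),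
      |(if τ ≤ a then (1:ℝ) else 0) - (if τ ≤ c then (1:ℝ) else 0)|
      = |(m 0 : ℝ) - ∑ τ ∈ Finset.Icc (1:ℤ) (m 0), (if τ ≤ a then (1:ℝ) else 0)| := by
    have hcard : (((Finset.Ioc 0 (m 0)).card : ℝ)) = (m 0 : ℝ) := by
      rw [Int.card_Ioc]
      have h6 : ((m 0 - 0).toNat : ℤ) = m 0 := by omega
      exact_mod_cast h6
    have e1 : ∀ τ ∈ Finset.Ioc 0 (m 0),
        |(if τ ≤ a then (1:ℝ) else 0) - (if τ ≤ c then (1:ℝ) else 0)|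
          = 1 - (if τ ≤ a then (1:ℝ) else 0) := by
      intro τ hτ
      simp only [Finset.mem_Ioc] at hτ
      rw [if_pos (hτ.2.trans hm0c), abs_of_nonpos (by split <;> norm_num)]
      ring
    rw [Finset.sum_congr rfl e1, Finset.sum_sub_distrib, Finset.sum_const, nsmul_eq_mul,
      mul_one, hcard]
    have hb : ∑ τ ∈ Finset.Ioc 0 (m 0), (if τ ≤ a then (1:ℝ) else 0) ≤ (m 0 : ℝ) := by
      rw [← hcard]
      calc _ ≤ ∑ τ ∈ Finset.Ioc 0 (m 0), (1:ℝ) :=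
        Finset.sum_le_sum (fun τ _ => by split <;> norm_num)
      _ = _ := by simp
    rw [abs_of_nonneg (by rw [show (1:ℤ) = 0 + 1 by ring, myIcc]; linarith),
      show (1:ℤ) = 0 + 1 by ring, myIcc]
  -- piece 3
  have hp3 : ∑ τ ∈ Finset.Ioc (m k) (L:ℤ),
      |(if τ ≤ a then (1:ℝ) else 0) - (if τ ≤ c then (1:ℝ) else 0)|
      = ∑ τ ∈ Finset.Icc (m k + 1) (L:ℤ), (if τ ≤ a then (1:ℝ) else 0) := by
    rw [myIcc]
    apply Finset.sum_congr rfl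
    intro τ hτ
    simp only [Finset.mem_Ioc] at hτ
    rw [if_neg (show ¬ τ ≤ c by omega), sub_zero, abs_of_nonneg (by split <;> norm_num)]
  -- middle
  have hp2 : ∑ τ ∈ Finset.Ioc (m 0) (m k),
      |(if τ ≤ a then (1:ℝ) else 0) - (if τ ≤ c then (1:ℝ) else 0)|
      = ∑ l ∈ Finset.Icc 1 k, ((m l : ℝ) - (m (l-1) : ℝ)) *
          |(1/((m l : ℝ) - (m (l-1) : ℝ))) *
              (∑ τ ∈ Finset.Icc (m (l-1) + 1) (m l), (if τ ≤ a then (1:ℝ) else 0))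
            - (if m l ≤ c then (1:ℝ) else 0)| := by
    rw [telescope m _ k hmono]
    apply Finset.sum_congr rfl
    intro l hl
    simp only [Finset.mem_Icc] at hl
    have hlt : m (l-1) < m l := by
      have := hmono (l-1) (by omega)
      rwa [show l - 1 + 1 = l by omega] at this
    have e2 : ∀ τ ∈ Finset.Ioc (m (l-1)) (m l),
        |(if τ ≤ a then (1:ℝ) else 0) - (if τ ≤ c then (1:ℝ) else 0)|
          = |(if τ ≤ a then (1:ℝ) else 0) - (if m l ≤ c then (1:ℝ) else 0)| := by
      intro τ hτ
      rw [blockconst m k hmono l hl.1 hl.2 c j hj hc τ hτ]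
    rw [Finset.sum_congr rfl e2, myIcc,
      ← blockabs (m (l-1)) (m l) hlt a _ (by split <;> simp)]
  rw [hp1, hp3, hp2]
  ring

lemma pairterm (k : ℕ) (m : ℕ → ℤ) (hmono : ∀ l, l < k → m l < m (l + 1))
    (c c' : ℤ) (j j' : ℕ) (hj : j ≤ k) (hj' : j' ≤ k) (hc : c = m j) (hc' : c' = m j') :
    |(c:ℝ) - c'| = ∑ l ∈ Finset.Icc 1 k, ((m l : ℝ) - (m (l-1) : ℝ)) *
        |(if m l ≤ c then (1:ℝ) else 0) - (if m l ≤ c' then (1:ℝ) else 0)| := by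
  have hb : m 0 ≤ c ∧ c ≤ m k := ⟨hc ▸ mymono m k hmono 0 j (Nat.zero_le _) hj,
    hc ▸ mymono m k hmono j k hj le_rfl⟩
  have hb' : m 0 ≤ c' ∧ c' ≤ m k := ⟨hc' ▸ mymono m k hmono 0 j' (Nat.zero_le _) hj',
    hc' ▸ mymono m k hmono j' k hj' le_rfl⟩
  rw [key1 c c' (m 0) (m k) hb.1 hb.2 hb'.1 hb'.2, telescope m _ k hmono]
  apply Finset.sum_congr rfl
  intro l hl
  simp only [Finset.mem_Icc] at hl
  have hlt : m (l-1) < m l := by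
    have := hmono (l-1) (by omega)
    rwa [show l - 1 + 1 = l by omega] at this
  have e : ∀ τ ∈ Finset.Ioc (m (l-1)) (m l),
      |(if τ ≤ c then (1:ℝ) else 0) - (if τ ≤ c' then (1:ℝ) else 0)|
        = |(if m l ≤ c then (1:ℝ) else 0) - (if m l ≤ c' then (1:ℝ) else 0)| := by
    intro τ hτ
    rw [blockconst m k hmono l hl.1 hl.2 c j hj hc τ hτ,
      blockconst m k hmono l hl.1 hl.2 c' j' hj' hc' τ hτ]
  rw [Finset.sum_congr rfl e, Finset.sum_const, nsmul_eq_mul, Int.card_Ioc]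
  congr 1
  have h7 : ((m l - m (l-1)).toNat : ℤ) = m l - m (l-1) := by omega
  exact_mod_cast h7

lemma assemble {V : Type} [Fintype V] (k : ℕ) (lam A : V → ℝ) (beta : V → V → ℝ)
    (d : ℕ → ℝ) (Z : ℕ → V → ℝ) (W : ℕ → V → V → ℝ) :
    (∑ i, lam i * (A i + ∑ l ∈ Finset.Icc 1 k, d l * Z l i))
      + ∑ i, ∑ i', beta i i' * ∑ l ∈ Finset.Icc 1 k, d l * W l i i'
    = (∑ i, lam i * A i)
      + ∑ l ∈ Finset.Icc 1 k, d l *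
          ((∑ i, lam i * Z l i) + ∑ i, ∑ i', beta i i' * W l i i') := by
  have h0 : ∑ i, lam i * (A i + ∑ l ∈ Finset.Icc 1 k, d l * Z l i)
      = ∑ i, lam i * A i + ∑ i, lam i * ∑ l ∈ Finset.Icc 1 k, d l * Z l i := by
    rw [← Finset.sum_add_distrib]
    exact Finset.sum_congr rfl fun i _ => by ring
  have h1 : ∑ i, lam i * ∑ l ∈ Finset.Icc 1 k, d l * Z l i
      = ∑ l ∈ Finset.Icc 1 k, d l * ∑ i, lam i * Z l i := by
    simp only [Finset.mul_sum]
    rw [Finset.sum_comm]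
    exact Finset.sum_congr rfl fun l _ => Finset.sum_congr rfl fun i _ => by ring
  have h2 : ∑ i, ∑ i', beta i i' * ∑ l ∈ Finset.Icc 1 k, d l * W l i i'
      = ∑ l ∈ Finset.Icc 1 k, d l * ∑ i, ∑ i', beta i i' * W l i i' := by
    have ha : ∀ i : V, ∑ i', beta i i' * ∑ l ∈ Finset.Icc 1 k, d l * W l i i'
        = ∑ l ∈ Finset.Icc 1 k, ∑ i', d l * (beta i i' * W l i i') := by
      intro i
      simp only [Finset.mul_sum]
      rw [Finset.sum_comm]
      exact Finset.sum_congr rfl fun l _ => Finset.sum_congr rfl fun i' _ => by ring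
    calc ∑ i, ∑ i', beta i i' * ∑ l ∈ Finset.Icc 1 k, d l * W l i i'
        = ∑ i, ∑ l ∈ Finset.Icc 1 k, ∑ i', d l * (beta i i' * W l i i') :=
          Finset.sum_congr rfl fun i _ => ha i
      _ = ∑ l ∈ Finset.Icc 1 k, ∑ i, ∑ i', d l * (beta i i' * W l i i') := Finset.sum_comm
      _ = ∑ l ∈ Finset.Icc 1 k, d l * ∑ i, ∑ i', beta i i' * W l i i' := by
          apply Finset.sum_congr rfl
          intro l _
          simp only [Finset.mul_sum]
  rw [h0, h1, h2, add_assoc, ← Finset.sum_add_distrib]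
  congr 1
  exact Finset.sum_congr rfl fun l _ => by ring

/-- The exponential energy on integer label vectors. -/
noncomputable def U1 {V : Type} [Fintype V] (f : V → ℤ) (lam : V → ℝ)
    (beta : V → V → ℝ) (mm : V → ℤ) : ℝ :=
  ∑ i, lam i * |((f i : ℝ) - (mm i : ℝ))| + ∑ i, ∑ j, beta i j * |((mm i : ℝ) - (mm j : ℝ))|

/-- The averaged layer data z_i(l) of the feature vector f. -/
noncomputable def zData {V : Type} (f : V → ℤ) (m : ℕ → ℤ) (l : ℕ) (i : V) : ℝ :=
  (1 / ((m l : ℝ) - (m (l - 1) : ℝ))) *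
    ∑ τ ∈ Finset.Icc (m (l - 1) + 1) (m l), (if τ ≤ f i then (1 : ℝ) else 0)

/-- Decomposition of the exponential energy U₁ into level energies u(l, x(l)). -/
theorem stmt11 {V : Type} [Fintype V] (L k : ℕ) (f : V → ℤ)
    (hf : ∀ i, 0 ≤ f i ∧ f i ≤ (L : ℤ)) (lam : V → ℝ) (hlam : ∀ i, 0 ≤ lam i)
    (beta : V → V → ℝ) (hbeta : ∀ i j, 0 ≤ beta i j)
    (m : ℕ → ℤ) (h0 : 0 ≤ m 0) (hL : m k ≤ (L : ℤ))
    (hmono : ∀ l, l < k → m l < m (l + 1))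
    (mm : V → ℤ) (hmm : ∀ i, ∃ j ≤ k, mm i = m j) :
    U1 f lam beta mm =
      (∑ i, lam i *
        (|(m 0 : ℝ) - ∑ τ ∈ Finset.Icc (1 : ℤ) (m 0), (if τ ≤ f i then (1 : ℝ) else 0)|
          + ∑ τ ∈ Finset.Icc (m k + 1) (L : ℤ), (if τ ≤ f i then (1 : ℝ) else 0)))
      + ∑ l ∈ Finset.Icc 1 k, ((m l : ℝ) - (m (l - 1) : ℝ)) *
          uEn lam beta (zData f m l)
            (fun i => if m l ≤ mm i then (1 : ℝ) else 0) := by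
  choose j hj hc using hmm
  have hdata : ∀ i : V, |((f i : ℝ) - (mm i : ℝ))| =
      (|(m 0 : ℝ) - ∑ τ ∈ Finset.Icc (1 : ℤ) (m 0), (if τ ≤ f i then (1 : ℝ) else 0)|
        + ∑ τ ∈ Finset.Icc (m k + 1) (L : ℤ), (if τ ≤ f i then (1 : ℝ) else 0))
      + ∑ l ∈ Finset.Icc 1 k, ((m l : ℝ) - (m (l-1) : ℝ)) *
          |zData f m l i - (if m l ≤ mm i then (1:ℝ) else 0)| :=
    fun i => dataterm L k m h0 hL hmono (f i) (mm i) (hf i).1 (hf i).2 (j i) (hj i) (hc i)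
  have hpair : ∀ i i' : V, |((mm i : ℝ) - (mm i' : ℝ))| =
      ∑ l ∈ Finset.Icc 1 k, ((m l : ℝ) - (m (l-1) : ℝ)) *
        |(if m l ≤ mm i then (1:ℝ) else 0) - (if m l ≤ mm i' then (1:ℝ) else 0)| :=
    fun i i' => pairterm k m hmono (mm i) (mm i') (j i) (j i') (hj i) (hj i') (hc i) (hc i')
  unfold U1 uEn
  simp only [hdata, hpair]
  exact assemble k lam _ beta _ _ _
end

section
/- If x̌(1) ≥ x̌(2) ≥ ... ≥ x̌(k) is an ordered sequence of Boolean vectors such that x̌(l) minimizes u(l,·) over {0,1}^V for each l, then the label vector m̂ with coordinates m̂ᵢ = m(0) + Σ_{l=1}^{k} (m(l) - m(l-1)) · x̌ᵢ(l) minimizes U₁(m) over M^V. -/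
open Finset

/-- The exponential energy on real-valued label vectors. -/
noncomputable def U1R {V : Type} [Fintype V] (f : V → ℤ) (lam : V → ℝ)
    (beta : V → V → ℝ) (mm : V → ℝ) : ℝ :=
  ∑ i, lam i * |((f i : ℝ) - mm i)| + ∑ i, ∑ j, beta i j * |mm i - mm j|

/-!
For integers `a, b` in a window `[lo, hi]`, `|a - b| = ∑_{τ ∈ (lo, hi]} |1[τ ≤ a] - 1[τ ≤ b]|`.
For a label `a ∈ M` the indicator `1[τ ≤ a]` is constant on each block `(m(l-1), m(l)]`, where it
equals the layer bit `1[m(l) ≤ a]`. Summing over a block therefore turns the data term into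
`(m(l) - m(l-1)) |zᵢ(l) - bᵢ(l)|` and the pairwise term into `(m(l) - m(l-1)) |bᵢ(l) - bⱼ(l)|`,
while the thresholds outside `(m(0), m(k)]` contribute a constant. Hence
`U₁(m) = C + ∑ₗ (m(l) - m(l-1)) u(l, b(l))` with `C` independent of the labelling. An ordered
sequence of Boolean vectors is exactly the layer sequence of the labelling `m̂`, so minimizing
every `u(l, ·)` separately minimizes `U₁`.
-/

noncomputable def levelInd {α : Type*} [LinearOrder α] (a τ : α) : ℝ := if τ ≤ a then 1 else 0

lemma levelInd_mem_Icc {α : Type*} [LinearOrder α] (a τ : α) : levelInd a τ ∈ Set.Icc 0 1 := by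
  unfold levelInd; split_ifs <;> norm_num

lemma levelInd_eq_zero_or_eq_one {α : Type*} [LinearOrder α] (a τ : α) :
    levelInd a τ = 0 ∨ levelInd a τ = 1 := by
  by_cases h : τ ≤ a <;> simp [levelInd, h]

lemma isBool_levelInd {V : Type} {α : Type*} [LinearOrder α] (a : V → α) (τ : α) :
    IsBool fun i => levelInd (a i) τ := fun i => levelInd_eq_zero_or_eq_one (a i) τ

lemma Int.cast_card_Ioc {p q : ℤ} (h : p ≤ q) : ((Ioc p q).card : ℝ) = q - p := by
  rw [Int.card_Ioc, ← Int.cast_natCast, Int.toNat_of_nonneg (sub_nonneg.2 h), Int.cast_sub]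

lemma sum_levelInd_Ioc {lo a hi : ℤ} (hlo : lo ≤ a) (hhi : a ≤ hi) :
    ∑ τ ∈ Ioc lo hi, levelInd a τ = a - lo := by
  have : (Ioc lo hi).filter (· ≤ a) = Ioc lo a := by
    ext τ; simp only [mem_filter, mem_Ioc]; omega
  unfold levelInd
  rw [sum_boole, this, Int.cast_card_Ioc hlo]

lemma abs_sub_eq_sum_abs_levelInd_sub {lo hi a b : ℤ} (ha : a ∈ Set.Icc lo hi)
    (hb : b ∈ Set.Icc lo hi) :
    |(a : ℝ) - b| = ∑ τ ∈ Ioc lo hi, |levelInd a τ - levelInd b τ| := by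
  wlog hab : a ≤ b generalizing a b
  · simp_rw [abs_sub_comm (a : ℝ), abs_sub_comm (levelInd a _)]
    exact this hb ha (le_of_not_ge hab)
  have h : ∀ τ, |levelInd a τ - levelInd b τ| = levelInd b τ - levelInd a τ := fun τ => by
    unfold levelInd; split_ifs <;> norm_num; omega
  rw [sum_congr rfl fun τ _ => h τ, sum_sub_distrib, sum_levelInd_Ioc hb.1 hb.2,
    sum_levelInd_Ioc ha.1 ha.2, abs_of_nonpos (by exact_mod_cast sub_nonpos.2 hab)]
  ring

/-- The thresholds `τ ∉ (p, q]` contribute the same amount to `|t - a|` for every `a ∈ [p, q]`;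
`outerDist t p q` is that amount. -/
noncomputable def outerDist (t p q : ℤ) : ℝ :=
  |(t : ℝ) - p| - ∑ τ ∈ Ioc p q, |levelInd t τ - levelInd p τ|

lemma abs_sub_eq_outerDist_add {t p q a : ℤ} (ha : a ∈ Set.Icc p q) :
    |(t : ℝ) - a| = outerDist t p q + ∑ τ ∈ Ioc p q, |levelInd t τ - levelInd a τ| := by
  have hsub : Ioc p q ⊆ Ioc (min t p) (max t q) :=
    Ioc_subset_Ioc (min_le_right t p) (le_max_right t q)
  have hmem : ∀ b ∈ Set.Icc p q, b ∈ Set.Icc (min t p) (max t q) := fun b hb =>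
    ⟨(min_le_right t p).trans hb.1, hb.2.trans (le_max_right t q)⟩
  have ht : t ∈ Set.Icc (min t p) (max t q) := ⟨min_le_left t p, le_max_left t q⟩
  suffices h : |(t : ℝ) - a| - ∑ τ ∈ Ioc p q, |levelInd t τ - levelInd a τ| = outerDist t p q by
    linarith
  rw [outerDist, abs_sub_eq_sum_abs_levelInd_sub ht (hmem a ha),
    abs_sub_eq_sum_abs_levelInd_sub ht (hmem p ⟨le_rfl, ha.1.trans ha.2⟩),
    ← sum_sdiff_eq_sub hsub, ← sum_sdiff_eq_sub hsub]
  refine sum_congr rfl fun τ hτ => ?_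
  have hτ' : τ ≤ p ∨ q < τ := by
    simp only [mem_sdiff, mem_Ioc] at hτ; omega
  obtain ⟨hpa, haq⟩ := ha
  unfold levelInd
  split_ifs <;> first | rfl | omega

lemma sum_abs_sub_eq_abs_sum_sub {ι : Type*} (s : Finset ι) {g : ι → ℝ}
    (hg : ∀ τ ∈ s, g τ ∈ Set.Icc 0 1) {b : ℝ} (hb : b = 0 ∨ b = 1) :
    ∑ τ ∈ s, |g τ - b| = |∑ τ ∈ s, g τ - s.card * b| := by
  rcases hb with rfl | rfl
  · simp only [sub_zero, mul_zero]
    rw [abs_of_nonneg (sum_nonneg fun τ hτ => (hg τ hτ).1)]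
    exact sum_congr rfl fun τ hτ => abs_of_nonneg (hg τ hτ).1
  · have : ∑ τ ∈ s, g τ ≤ s.card := by
      simpa using sum_le_sum fun τ hτ => (hg τ hτ).2
    rw [mul_one, abs_of_nonpos (sub_nonpos.2 this), neg_sub, ← nsmul_one, ← sum_const,
      ← sum_sub_distrib]
    exact sum_congr rfl fun τ hτ => by rw [abs_of_nonpos (by linarith [(hg τ hτ).2]), neg_sub]

lemma sub_mul_zData {V : Type} (f : V → ℤ) (m : ℕ → ℤ) (l : ℕ) (i : V) (hl : m (l - 1) ≠ m l) :
    ((m l : ℝ) - m (l - 1)) * zData f m l i = ∑ τ ∈ Ioc (m (l - 1)) (m l), levelInd (f i) τ := by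
  have hΔ : (m l : ℝ) - m (l - 1) ≠ 0 := sub_ne_zero.2 (by exact_mod_cast hl.symm)
  rw [zData, ← mul_assoc, mul_one_div_cancel hΔ, one_mul, Icc_add_one_left_eq_Ioc]
  rfl

lemma sum_abs_levelInd_sub_eq_mul_abs_zData {V : Type} (f : V → ℤ) (m : ℕ → ℤ) (l : ℕ) (i : V)
    (hl : m (l - 1) < m l) {b : ℝ} (hb : b = 0 ∨ b = 1) :
    ∑ τ ∈ Ioc (m (l - 1)) (m l), |levelInd (f i) τ - b|
      = ((m l : ℝ) - m (l - 1)) * |zData f m l i - b| := by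
  have hΔ : (0 : ℝ) < m l - m (l - 1) := sub_pos.2 (by exact_mod_cast hl)
  rw [sum_abs_sub_eq_abs_sum_sub _ (fun τ _ => levelInd_mem_Icc _ _) hb, Int.cast_card_Ioc hl.le,
    ← sub_mul_zData f m l i hl.ne, ← mul_sub, abs_mul, abs_of_pos hΔ]

section Layers

variable {m : ℕ → ℤ} {k : ℕ}

lemma mem_Icc_of_monotoneOn (hm : MonotoneOn m (Set.Iic k)) {J : ℕ} (hJ : J ≤ k) :
    m J ∈ Set.Icc (m 0) (m k) :=
  ⟨hm (by simp) hJ (Nat.zero_le J), hm hJ (by simp) hJ⟩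

lemma lt_of_mem_Icc_of_strictMonoOn (hm : StrictMonoOn m (Set.Iic k)) {l : ℕ}
    (hl : l ∈ Icc 1 k) : m (l - 1) < m l := by
  rw [mem_Icc] at hl
  exact hm (Set.mem_Iic.2 (by omega)) (Set.mem_Iic.2 hl.2) (by omega)

lemma sum_Icc_sum_Ioc_eq_sum_Ioc (hm : MonotoneOn m (Set.Iic k)) (g : ℤ → ℝ) :
    ∑ l ∈ Icc 1 k, ∑ τ ∈ Ioc (m (l - 1)) (m l), g τ = ∑ τ ∈ Ioc (m 0) (m k), g τ := by
  induction k with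
  | zero => simp
  | succ n ih =>
    have hn : n ∈ Set.Iic (n + 1) := Set.mem_Iic.2 n.le_succ
    rw [sum_Icc_succ_top (by omega), ih (hm.mono (Set.Iic_subset_Iic.2 n.le_succ)),
      Nat.add_sub_cancel, ← sum_union (Ioc_disjoint_Ioc_of_le le_rfl),
      Ioc_union_Ioc_eq_Ioc (hm (by simp) hn (Nat.zero_le n)) (hm hn (by simp) n.le_succ)]

lemma levelInd_eq_of_mem_Ioc {J l : ℕ} (hm : MonotoneOn m (Set.Iic k))
    (hJ : J ≤ k) (hl : l ∈ Icc 1 k) {τ : ℤ} (hτ : τ ∈ Ioc (m (l - 1)) (m l)) :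
    levelInd (m J) τ = levelInd J l := by
  rw [mem_Icc] at hl
  rw [mem_Ioc] at hτ
  unfold levelInd
  by_cases hlJ : l ≤ J
  · rw [if_pos (hτ.2.trans (hm (Set.mem_Iic.2 hl.2) (Set.mem_Iic.2 hJ) hlJ)), if_pos hlJ]
  · have := hm (Set.mem_Iic.2 hJ) (Set.mem_Iic.2 (by omega : l - 1 ≤ k)) (by omega : J ≤ l - 1)
    rw [if_neg (by omega), if_neg hlJ]

lemma abs_sub_eq_outerDist_add_sum_layers {V : Type} (hm : StrictMonoOn m (Set.Iic k))
    {J : ℕ} (hJ : J ≤ k) (f : V → ℤ) (i : V) :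
    |(f i : ℝ) - m J| = outerDist (f i) (m 0) (m k)
      + ∑ l ∈ Icc 1 k, ((m l : ℝ) - m (l - 1)) * |zData f m l i - levelInd J l| := by
  rw [abs_sub_eq_outerDist_add (mem_Icc_of_monotoneOn hm.monotoneOn hJ),
    ← sum_Icc_sum_Ioc_eq_sum_Ioc hm.monotoneOn]
  refine congrArg _ (sum_congr rfl fun l hl => ?_)
  rw [← sum_abs_levelInd_sub_eq_mul_abs_zData f m l i (lt_of_mem_Icc_of_strictMonoOn hm hl)
    (levelInd_eq_zero_or_eq_one J l)]
  exact sum_congr rfl fun τ hτ => by rw [levelInd_eq_of_mem_Ioc hm.monotoneOn hJ hl hτ]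

lemma abs_sub_eq_sum_layers (hm : MonotoneOn m (Set.Iic k)) {J J' : ℕ} (hJ : J ≤ k)
    (hJ' : J' ≤ k) :
    |(m J : ℝ) - m J'|
      = ∑ l ∈ Icc 1 k, ((m l : ℝ) - m (l - 1)) * |levelInd J l - levelInd J' l| := by
  rw [abs_sub_eq_sum_abs_levelInd_sub (mem_Icc_of_monotoneOn hm hJ)
    (mem_Icc_of_monotoneOn hm hJ'), ← sum_Icc_sum_Ioc_eq_sum_Ioc hm]
  refine sum_congr rfl fun l hl => ?_
  have hl' := mem_Icc.1 hl
  rw [sum_congr rfl fun τ hτ => by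
      rw [levelInd_eq_of_mem_Ioc hm hJ hl hτ, levelInd_eq_of_mem_Ioc hm hJ' hl hτ],
    sum_const, nsmul_eq_mul,
    Int.cast_card_Ioc (hm (Set.mem_Iic.2 (by omega)) (Set.mem_Iic.2 hl'.2) (by omega))]

end Layers

lemma sum_mul_uEn {V : Type} [Fintype V] (lam : V → ℝ) (beta : V → V → ℝ) (s : Finset ℕ)
    (w : ℕ → ℝ) (z b : ℕ → V → ℝ) :
    ∑ l ∈ s, w l * uEn lam beta (z l) (b l)
      = ∑ i, lam i * ∑ l ∈ s, w l * |z l i - b l i|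
        + ∑ i, ∑ j, beta i j * ∑ l ∈ s, w l * |b l i - b l j| := by
  simp only [uEn, mul_add, mul_sum, sum_add_distrib]
  congr 1
  · rw [sum_comm]; simp only [mul_left_comm]
  · rw [sum_comm]; refine sum_congr rfl fun i _ => ?_
    rw [sum_comm]; simp only [mul_left_comm]

/-- Labels in `M` are encoded by their indices `J i ≤ k`; as `m` is strictly monotone,
`levelInd (J i) l = 1[m l ≤ m (J i)]` is the `l`-th layer bit of the labelling `i ↦ m (J i)`. -/
theorem U1R_eq_add_sum_uEn {V : Type} [Fintype V] (f : V → ℤ) (lam : V → ℝ)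
    (beta : V → V → ℝ) {m : ℕ → ℤ} {k : ℕ} (hm : StrictMonoOn m (Set.Iic k)) {J : V → ℕ}
    (hJ : ∀ i, J i ≤ k) :
    U1R f lam beta (fun i => (m (J i) : ℝ))
      = ∑ i, lam i * outerDist (f i) (m 0) (m k)
        + ∑ l ∈ Icc 1 k, ((m l : ℝ) - m (l - 1))
            * uEn lam beta (zData f m l) (fun i => levelInd (J i) l) := by
  have hsite := fun i => abs_sub_eq_outerDist_add_sum_layers hm (hJ i) f i
  have hpair := fun i j => abs_sub_eq_sum_layers hm.monotoneOn (hJ i) (hJ j)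
  simp only [U1R, hsite, hpair, sum_mul_uEn, mul_add, sum_add_distrib]
  ring

lemma exists_eq_levelInd_of_antitoneOn {x : ℕ → ℝ} {k : ℕ}
    (hbool : ∀ l ∈ Set.Icc 1 k, x l = 0 ∨ x l = 1) (hanti : AntitoneOn x (Set.Icc 1 k)) :
    ∃ J ≤ k, ∀ l ∈ Set.Icc 1 k, x l = levelInd J l := by
  classical
  set J := Nat.findGreatest (fun l => x l = 1) k
  refine ⟨J, Nat.findGreatest_le k, fun l hl => ?_⟩
  have hl1 := hl.1
  unfold levelInd
  split_ifs with hlJ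
  · have hJ : x J = 1 := Nat.findGreatest_of_ne_zero rfl (show J ≠ 0 by omega)
    have := hanti hl ⟨hl1.trans hlJ, Nat.findGreatest_le k⟩ hlJ
    exact (hbool l hl).resolve_left (by linarith)
  · exact (hbool l hl).resolve_right
      (Nat.findGreatest_is_greatest (P := fun l => x l = 1) (by omega) hl.2)

lemma sum_Icc_sub_pred (g : ℕ → ℝ) (n : ℕ) : ∑ l ∈ Icc 1 n, (g l - g (l - 1)) = g n - g 0 := by
  induction n with
  | zero => simp
  | succ n ih => rw [sum_Icc_succ_top (by omega), ih, Nat.add_sub_cancel]; ring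

lemma sum_Icc_sub_pred_mul_levelInd (g : ℕ → ℝ) {k J : ℕ} (hJ : J ≤ k) :
    ∑ l ∈ Icc 1 k, (g l - g (l - 1)) * levelInd J l = g J - g 0 := by
  have : (Icc 1 k).filter (· ≤ J) = Icc 1 J := by
    ext l; simp only [mem_filter, mem_Icc]; omega
  simp only [levelInd, mul_ite, mul_one, mul_zero]
  rw [← sum_filter, this, sum_Icc_sub_pred]

theorem stmt12_general {V : Type} [Fintype V] (k : ℕ) (f : V → ℤ) (lam : V → ℝ) (beta : V → V → ℝ)
    (m : ℕ → ℤ) (hmono : ∀ l, l < k → m l < m (l + 1)) (x : ℕ → V → ℝ)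
    (hxmin : ∀ l, 1 ≤ l → l ≤ k → Minimizes lam beta (zData f m l) (x l))
    (hxord : ∀ l l', 1 ≤ l → l ≤ l' → l' ≤ k → ∀ i, x l' i ≤ x l i) :
    (∀ i, ∃ j ≤ k,
      (m 0 : ℝ) + ∑ l ∈ Finset.Icc 1 k, ((m l : ℝ) - (m (l - 1) : ℝ)) * x l i = (m j : ℝ)) ∧
    ∀ mm : V → ℤ, (∀ i, ∃ j ≤ k, mm i = m j) →
      U1R f lam beta
        (fun i => (m 0 : ℝ) + ∑ l ∈ Finset.Icc 1 k, ((m l : ℝ) - (m (l - 1) : ℝ)) * x l i)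
      ≤ U1R f lam beta (fun i => (mm i : ℝ)) := by
  have hm : StrictMonoOn m (Set.Iic k) := strictMonoOn_Iic_of_lt_succ hmono
  choose J hJk hxJ using fun i => exists_eq_levelInd_of_antitoneOn (x := (x · i))
    (fun l hl => (hxmin l hl.1 hl.2).1 i) (fun l hl l' hl' hll' => hxord l l' hl.1 hll' hl'.2 i)
  have hx : ∀ l ∈ Icc 1 k, x l = fun i => levelInd (J i) l :=
    fun l hl => funext fun i => hxJ i l (mem_Icc.1 hl)
  have hhat : ∀ i,
      (m 0 : ℝ) + ∑ l ∈ Icc 1 k, ((m l : ℝ) - m (l - 1)) * x l i = m (J i) := fun i => by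
    rw [sum_congr rfl fun l hl => by rw [hx l hl],
      sum_Icc_sub_pred_mul_levelInd (fun l => (m l : ℝ)) (hJk i)]
    ring
  refine ⟨fun i => ⟨J i, hJk i, hhat i⟩, fun mm hmm => ?_⟩
  choose j hjk hj using hmm
  simp only [hhat, hj]
  rw [U1R_eq_add_sum_uEn f lam beta hm hJk, U1R_eq_add_sum_uEn f lam beta hm hjk]
  gcongr with l hl
  · exact sub_nonneg.2 (by exact_mod_cast (lt_of_mem_Icc_of_strictMonoOn hm hl).le)
  · rw [← hx l hl]
    exact (hxmin l (mem_Icc.1 hl).1 (mem_Icc.1 hl).2).2 _ (isBool_levelInd _ _)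

/-- An ordered sequence of minimizers of the level energies u(l,·) yields
a minimizer of the exponential energy U₁ over the label space M^V. -/
theorem stmt12 {V : Type} [Fintype V] (L k : ℕ) (f : V → ℤ)
    (hf : ∀ i, 0 ≤ f i ∧ f i ≤ (L : ℤ)) (lam : V → ℝ) (hlam : ∀ i, 0 ≤ lam i)
    (beta : V → V → ℝ) (hbeta : ∀ i j, 0 ≤ beta i j)
    (m : ℕ → ℤ) (h0 : 0 ≤ m 0) (hL : m k ≤ (L : ℤ))
    (hmono : ∀ l, l < k → m l < m (l + 1))
    (x : ℕ → V → ℝ)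
    (hxmin : ∀ l, 1 ≤ l → l ≤ k → Minimizes lam beta (zData f m l) (x l))
    (hxord : ∀ l l', 1 ≤ l → l ≤ l' → l' ≤ k → ∀ i, x l' i ≤ x l i) :
    (∀ i, ∃ j ≤ k,
      (m 0 : ℝ) + ∑ l ∈ Finset.Icc 1 k, ((m l : ℝ) - (m (l - 1) : ℝ)) * x l i = (m j : ℝ)) ∧
    ∀ mm : V → ℤ, (∀ i, ∃ j ≤ k, mm i = m j) →
      U1R f lam beta
        (fun i => (m 0 : ℝ) + ∑ l ∈ Finset.Icc 1 k, ((m l : ℝ) - (m (l - 1) : ℝ)) * x l i)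
      ≤ U1R f lam beta (fun i => (mm i : ℝ)) :=
  stmt12_general k f lam beta m hmono x hxmin hxord
end

section
/- Any collection of Boolean vectors (q*(1),...,q*(k)) minimizing the modified polynomial Q over ({0,1}^V)^k (where Q is obtained from P by replacing the quadratic terms xᵢ(τ)xᵢ(l) in the second sum by xᵢ(l)) necessarily satisfies q*(1) ≥ q*(2) ≥ ... ≥ q*(k) coordinatewise. -/
open Finset

/-- The Gaussian energy on integer label vectors. -/
noncomputable def U2 {V : Type} [Fintype V] (f : V → ℤ) (lam : V → ℝ)
    (beta : V → V → ℝ) (mm : V → ℤ) : ℝ :=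
  ∑ i, lam i * ((f i : ℝ) - (mm i : ℝ)) ^ 2 + ∑ i, ∑ j, beta i j * ((mm i : ℝ) - (mm j : ℝ)) ^ 2

/-- The Boolean polynomial P arising from the Gaussian energy. -/
noncomputable def Ppoly {V : Type} [Fintype V] (k : ℕ) (f : V → ℤ) (m : ℕ → ℤ)
    (lam : V → ℝ) (beta : V → V → ℝ) (x : ℕ → V → ℝ) : ℝ :=
  (∑ i, ∑ l ∈ Finset.Icc 1 k,
      (lam i * ((m l : ℝ) - (m (l - 1) : ℝ)) ^ 2
        - 2 * lam i * ((f i : ℝ) - (m 0 : ℝ)) * ((m l : ℝ) - (m (l - 1) : ℝ))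
        - ((m l : ℝ) - (m (l - 1) : ℝ)) * ((m k : ℝ) - (m 0 : ℝ) - ((m l : ℝ) - (m (l - 1) : ℝ)))
            * ∑ j, (beta i j + beta j i)) * x l i)
  + 2 * ∑ i, (lam i + ∑ j, (beta i j + beta j i)) *
      ∑ l ∈ Finset.Icc 1 k, ∑ τ ∈ Finset.Icc 1 (l - 1),
        ((m l : ℝ) - (m (l - 1) : ℝ)) * ((m τ : ℝ) - (m (τ - 1) : ℝ)) * (x τ i * x l i)
  + ∑ i, ∑ j, beta i j *
      ((∑ l ∈ Finset.Icc 1 k, ((m l : ℝ) - (m (l - 1) : ℝ)) ^ 2 * (x l i - x l j) ^ 2)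
        + ∑ l ∈ Finset.Icc 1 k, ∑ τ ∈ (Finset.Icc 1 k).erase l,
            ((m l : ℝ) - (m (l - 1) : ℝ)) * ((m τ : ℝ) - (m (τ - 1) : ℝ)) *
              ((x l i - x τ j) ^ 2 + (x l j - x τ i) ^ 2))

/-- The modified polynomial Q, in which the cross terms x_i(τ)x_i(l) of P are
replaced by x_i(l). -/
noncomputable def Qpoly {V : Type} [Fintype V] (k : ℕ) (f : V → ℤ) (m : ℕ → ℤ)
    (lam : V → ℝ) (beta : V → V → ℝ) (x : ℕ → V → ℝ) : ℝ :=
  (∑ i, ∑ l ∈ Finset.Icc 1 k,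
      (lam i * ((m l : ℝ) - (m (l - 1) : ℝ)) ^ 2
        - 2 * lam i * ((f i : ℝ) - (m 0 : ℝ)) * ((m l : ℝ) - (m (l - 1) : ℝ))
        - ((m l : ℝ) - (m (l - 1) : ℝ)) * ((m k : ℝ) - (m 0 : ℝ) - ((m l : ℝ) - (m (l - 1) : ℝ)))
            * ∑ j, (beta i j + beta j i)) * x l i)
  + 2 * ∑ i, (lam i + ∑ j, (beta i j + beta j i)) *
      ∑ l ∈ Finset.Icc 1 k, ∑ τ ∈ Finset.Icc 1 (l - 1),
        ((m l : ℝ) - (m (l - 1) : ℝ)) * ((m τ : ℝ) - (m (τ - 1) : ℝ)) * x l i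
  + ∑ i, ∑ j, beta i j *
      ((∑ l ∈ Finset.Icc 1 k, ((m l : ℝ) - (m (l - 1) : ℝ)) ^ 2 * (x l i - x l j) ^ 2)
        + ∑ l ∈ Finset.Icc 1 k, ∑ τ ∈ (Finset.Icc 1 k).erase l,
            ((m l : ℝ) - (m (l - 1) : ℝ)) * ((m τ : ℝ) - (m (τ - 1) : ℝ)) *
              ((x l i - x τ j) ^ 2 + (x l j - x τ i) ^ 2))

/-!
Flipping the single variable `x t i` from `0` to `1` changes `Q` by `a_t * flipGain x i t`,
where `a_t = m t - m (t - 1) > 0` and `flipGain` is explicit: the only part of it that depends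
on `t` is `λᵢ (a_t + 2 S_{t-1}) + ∑ⱼ (βᵢⱼ + βⱼᵢ) (2 S_{t-1} + 2 a_t x t j)`, with `S` the partial
sums of the gaps. At a Boolean minimiser `q` no single flip decreases `Q`, so the gain at `(t, i)`
is `≥ 0` where `q t i = 0` and `≤ 0` where `q t i = 1`. For Boolean `q` the gain is strictly
increasing in `t` (because `S_{l'-1} ≥ S_{l-1} + a_l` for `l < l'`), so `q l i = 0` and
`q l' i = 1` with `l < l'` cannot both hold.
-/

namespace Finset

variable {ι α R : Type*} [DecidableEq ι]

theorem sum_apply_update_sub_apply_update [AddCommGroup R] {s : Finset ι} {t : ι} (ht : t ∈ s)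
    (F : ι → α → R) (u : ι → α) (a b : α) :
    ∑ l ∈ s, F l (Function.update u t a l) - ∑ l ∈ s, F l (Function.update u t b l) =
      F t a - F t b := by
  simp only [Function.apply_update F, sum_update_of_mem ht]
  abel

variable [CommRing R]

theorem sum_sum_mul_update_update_sub [Fintype ι] {κ : Type*} [DecidableEq κ] {s : Finset κ}
    {t : κ} (ht : t ∈ s) (C Y : ι → κ → R) (i : ι) (a b : R) :
    ∑ i', ∑ l ∈ s, C i' l * Function.update Y i (Function.update (Y i) t a) i' l
      - ∑ i', ∑ l ∈ s, C i' l * Function.update Y i (Function.update (Y i) t b) i' l =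
      C i t * (a - b) := by
  refine (sum_apply_update_sub_apply_update (mem_univ i)
    (fun i' u => ∑ l ∈ s, C i' l * u l) Y _ _).trans ?_
  refine (sum_apply_update_sub_apply_update ht (fun l y => C i l * y) (Y i) a b).trans ?_
  ring

theorem sum_sum_update_sub_update [Fintype ι] (w : ι → ι → R) (hw : ∀ i, w i i = 0)
    (G : α → α → R) (hG : ∀ a b, G a b = G b a) (Y : ι → α) (i : ι) (a b : α) :
    ∑ i', ∑ j, w i' j * G (Function.update Y i a i') (Function.update Y i a j)
      - ∑ i', ∑ j, w i' j * G (Function.update Y i b i') (Function.update Y i b j) =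
      ∑ j, (w i j + w j i) * (G a (Y j) - G b (Y j)) := by
  have term : ∀ i' j,
      w i' j * G (Function.update Y i a i') (Function.update Y i a j)
        - w i' j * G (Function.update Y i b i') (Function.update Y i b j) =
      (if i' = i then w i j * (G a (Y j) - G b (Y j)) else 0)
        + (if j = i then w i' i * (G a (Y i') - G b (Y i')) else 0) := by
    intro i' j
    by_cases hi' : i' = i <;> by_cases hj : j = i
    · subst hi' hj; simp [hw]
    · subst hi'
      simp only [Function.update_self, Function.update_of_ne hj, if_pos, if_neg hj, add_zero]
      ring
    · subst hj
      simp only [Function.update_self, Function.update_of_ne hi', hG (Y i'), if_pos, if_neg hi',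
        zero_add]
      ring
    · simp [hi', hj]
  simp only [← sum_sub_distrib, term, sum_add_distrib, add_mul]
  simp [sum_ite_irrel]

end Finset

noncomputable def labelGap (m : ℕ → ℤ) (t : ℕ) : ℝ := (m t : ℝ) - (m (t - 1) : ℝ)

noncomputable def labelSum (m : ℕ → ℤ) (t : ℕ) : ℝ := ∑ τ ∈ Icc 1 t, labelGap m τ

theorem labelGap_pos {k t : ℕ} {m : ℕ → ℤ} (hmono : ∀ l, l < k → m l < m (l + 1))
    (ht : t ∈ Icc 1 k) : 0 < labelGap m t := by
  obtain ⟨ht1, htk⟩ := mem_Icc.mp ht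
  obtain ⟨s, rfl⟩ : ∃ s, t = s + 1 := ⟨t - 1, by omega⟩
  have : (m s : ℝ) < m (s + 1) := by exact_mod_cast hmono s (by omega)
  simp only [labelGap, Nat.add_sub_cancel]
  linarith

theorem labelSum_sub_one_add_labelGap (m : ℕ → ℤ) {t : ℕ} (ht : 1 ≤ t) :
    labelSum m (t - 1) + labelGap m t = labelSum m t := by
  obtain ⟨s, rfl⟩ : ∃ s, t = s + 1 := ⟨t - 1, by omega⟩
  rw [Nat.add_sub_cancel, labelSum, labelSum, sum_Icc_succ_top (by omega)]

theorem labelSum_mono {k s t : ℕ} {m : ℕ → ℤ} (hmono : ∀ l, l < k → m l < m (l + 1))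
    (hst : s ≤ t) (htk : t ≤ k) : labelSum m s ≤ labelSum m t :=
  sum_le_sum_of_subset_of_nonneg (Icc_subset_Icc le_rfl hst) fun _ hτ _ =>
    (labelGap_pos hmono (Icc_subset_Icc le_rfl htk hτ)).le

noncomputable def pairEnergy (k : ℕ) (m : ℕ → ℤ) (u v : ℕ → ℝ) : ℝ :=
  (∑ l ∈ Icc 1 k, labelGap m l ^ 2 * (u l - v l) ^ 2)
    + ∑ l ∈ Icc 1 k, ∑ τ ∈ (Icc 1 k).erase l,
        labelGap m l * labelGap m τ * ((u l - v τ) ^ 2 + (v l - u τ) ^ 2)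

theorem pairEnergy_comm (k : ℕ) (m : ℕ → ℤ) (u v : ℕ → ℝ) :
    pairEnergy k m u v = pairEnergy k m v u := by
  unfold pairEnergy
  congr 1
  · exact sum_congr rfl fun l _ => by ring
  · exact sum_congr rfl fun l _ => sum_congr rfl fun τ _ => by ring

theorem pairEnergy_eq (k : ℕ) (m : ℕ → ℤ) (u v : ℕ → ℝ) :
    pairEnergy k m u v =
      2 * ∑ l ∈ Icc 1 k, ∑ τ ∈ Icc 1 k, labelGap m l * labelGap m τ * (u l - v τ) ^ 2
        - ∑ l ∈ Icc 1 k, labelGap m l ^ 2 * (u l - v l) ^ 2 := by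
  have hswap : ∑ l ∈ Icc 1 k, ∑ τ ∈ Icc 1 k, labelGap m l * labelGap m τ * (v l - u τ) ^ 2 =
      ∑ l ∈ Icc 1 k, ∑ τ ∈ Icc 1 k, labelGap m l * labelGap m τ * (u l - v τ) ^ 2 := by
    rw [sum_comm]
    exact sum_congr rfl fun l _ => sum_congr rfl fun τ _ => by ring
  have hdiag : ∑ l ∈ Icc 1 k, labelGap m l * labelGap m l * ((u l - v l) ^ 2 + (v l - u l) ^ 2) =
      2 * ∑ l ∈ Icc 1 k, labelGap m l ^ 2 * (u l - v l) ^ 2 := by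
    rw [mul_sum]
    exact sum_congr rfl fun l _ => by ring
  unfold pairEnergy
  rw [sum_congr rfl fun l hl => sum_erase_eq_sub hl, sum_sub_distrib, hdiag]
  simp only [mul_add, sum_add_distrib, hswap]
  ring

theorem pairEnergy_update_one_sub_update_zero {k t : ℕ} (m : ℕ → ℤ)
    (ht : t ∈ Icc 1 k) (u v : ℕ → ℝ) :
    pairEnergy k m (Function.update u t 1) v - pairEnergy k m (Function.update u t 0) v =
      labelGap m t *
        (2 * ∑ τ ∈ Icc 1 k, labelGap m τ * (1 - 2 * v τ) - labelGap m t * (1 - 2 * v t)) := by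
  have hcross := sum_apply_update_sub_apply_update ht
    (fun l y => ∑ τ ∈ Icc 1 k, labelGap m l * labelGap m τ * (y - v τ) ^ 2) u 1 0
  have hdiag := sum_apply_update_sub_apply_update ht
    (fun l y => labelGap m l ^ 2 * (y - v l) ^ 2) u 1 0
  have hgap : ∑ τ ∈ Icc 1 k, labelGap m t * labelGap m τ * (1 - v τ) ^ 2
      - ∑ τ ∈ Icc 1 k, labelGap m t * labelGap m τ * (0 - v τ) ^ 2 =
      labelGap m t * ∑ τ ∈ Icc 1 k, labelGap m τ * (1 - 2 * v τ) := by
    rw [← sum_sub_distrib, mul_sum]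
    exact sum_congr rfl fun τ _ => by ring
  rw [pairEnergy_eq, pairEnergy_eq]
  linear_combination 2 * hcross - hdiag + 2 * hgap

section

variable {V : Type}

theorem IsBool.nonneg {b : V → ℝ} (hb : IsBool b) (i : V) : 0 ≤ b i := by
  rcases hb i with h | h <;> norm_num [h]

theorem IsBool.le_one {b : V → ℝ} (hb : IsBool b) (i : V) : b i ≤ 1 := by
  rcases hb i with h | h <;> norm_num [h]

variable [DecidableEq V]

def setCoord (x : ℕ → V → ℝ) (t : ℕ) (i : V) (c : ℝ) : ℕ → V → ℝ :=
  Function.update x t (Function.update (x t) i c)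

theorem setCoord_eq_update (x : ℕ → V → ℝ) (t : ℕ) (i : V) (c : ℝ) :
    setCoord x t i c =
      fun l j => Function.update (fun j l => x l j) i (Function.update (fun l => x l i) t c) j l := by
  ext l j
  by_cases hl : l = t <;> by_cases hj : j = i <;> simp [setCoord, hl, hj]

theorem setCoord_self (x : ℕ → V → ℝ) (t : ℕ) (i : V) : setCoord x t i (x t i) = x := by
  simp [setCoord]

theorem isBool_setCoord {k : ℕ} {x : ℕ → V → ℝ} (hx : ∀ l, 1 ≤ l → l ≤ k → IsBool (x l))
    (t : ℕ) (i : V) {c : ℝ} (hc : c = 0 ∨ c = 1) :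
    ∀ l, 1 ≤ l → l ≤ k → IsBool (setCoord x t i c l) := by
  intro l hl hlk j
  by_cases hlt : l = t
  · subst hlt
    by_cases hj : j = i
    · subst hj
      simpa [setCoord] using hc
    · simpa [setCoord, hj] using hx l hl hlk j
  · simpa [setCoord, hlt] using hx l hl hlk j

end

section

variable {V : Type} [Fintype V]

theorem Qpoly_eq (k : ℕ) (f : V → ℤ) (m : ℕ → ℤ) (lam : V → ℝ) (beta : V → V → ℝ)
    (Y : V → ℕ → ℝ) :
    Qpoly k f m lam beta (fun l j => Y j l) =
      ∑ i, ∑ l ∈ Icc 1 k,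
          (lam i * labelGap m l ^ 2 - 2 * lam i * ((f i : ℝ) - m 0) * labelGap m l
            - labelGap m l * ((m k : ℝ) - m 0 - labelGap m l) * ∑ j, (beta i j + beta j i)
            + 2 * (lam i + ∑ j, (beta i j + beta j i)) * labelGap m l * labelSum m (l - 1)) * Y i l
        + ∑ i, ∑ j, beta i j * pairEnergy k m (Y i) (Y j) := by
  unfold Qpoly
  simp only [← labelGap.eq_1]
  congr 1
  rw [mul_sum, ← sum_add_distrib]
  refine sum_congr rfl fun i _ => ?_
  rw [mul_sum, mul_sum, ← sum_add_distrib]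
  refine sum_congr rfl fun l _ => ?_
  rw [← sum_mul, ← mul_sum, labelSum]
  ring

noncomputable def flipGain (k : ℕ) (f : V → ℤ) (m : ℕ → ℤ) (lam : V → ℝ) (beta : V → V → ℝ)
    (x : ℕ → V → ℝ) (i : V) (t : ℕ) : ℝ :=
  lam i * (labelGap m t + 2 * labelSum m (t - 1) - 2 * ((f i : ℝ) - m 0))
    + ∑ j, (beta i j + beta j i) * (2 * labelSum m (t - 1) + 2 * labelGap m t * x t j
        + 2 * ∑ τ ∈ Icc 1 k, labelGap m τ * (1 - 2 * x τ j) - ((m k : ℝ) - m 0))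

theorem flipGain_lt {k l l' : ℕ} (f : V → ℤ) {m : ℕ → ℤ} {lam : V → ℝ} {beta : V → V → ℝ}
    {x : ℕ → V → ℝ} {i : V} (hlam : 0 < lam i) (hbeta : ∀ i j, 0 ≤ beta i j)
    (hmono : ∀ l, l < k → m l < m (l + 1)) (hl : 1 ≤ l) (hll' : l < l') (hl'k : l' ≤ k)
    (hx : ∀ j, x l j ≤ 1) (hx' : ∀ j, 0 ≤ x l' j) :
    flipGain k f m lam beta x i l < flipGain k f m lam beta x i l' := by
  have ha := labelGap_pos hmono (mem_Icc.mpr ⟨hl, by omega⟩)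
  have ha' := labelGap_pos hmono (mem_Icc.mpr ⟨by omega, hl'k⟩)
  have hS : labelSum m (l - 1) + labelGap m l ≤ labelSum m (l' - 1) := by
    rw [labelSum_sub_one_add_labelGap m hl]
    exact labelSum_mono hmono (by omega) (by omega)
  refine add_lt_add_of_lt_of_le (mul_lt_mul_of_pos_left (by linarith) hlam)
    (sum_le_sum fun j _ => mul_le_mul_of_nonneg_left ?_ (add_nonneg (hbeta i j) (hbeta j i)))
  linarith [mul_le_mul_of_nonneg_left (hx j) ha.le, mul_nonneg ha'.le (hx' j)]

end

section

variable {V : Type} [Fintype V] [DecidableEq V]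

theorem Qpoly_setCoord_one_sub_setCoord_zero {k t : ℕ} (f : V → ℤ) (m : ℕ → ℤ) (lam : V → ℝ)
    {beta : V → V → ℝ} (hdiag : ∀ i, beta i i = 0) (ht : t ∈ Icc 1 k) (x : ℕ → V → ℝ) (i : V) :
    Qpoly k f m lam beta (setCoord x t i 1) - Qpoly k f m lam beta (setCoord x t i 0) =
      labelGap m t * flipGain k f m lam beta x i t := by
  rw [setCoord_eq_update, setCoord_eq_update, Qpoly_eq, Qpoly_eq, add_sub_add_comm,
    sum_sum_update_sub_update beta hdiag _ (pairEnergy_comm k m), sum_sum_mul_update_update_sub ht]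
  simp only [pairEnergy_update_one_sub_update_zero m ht]
  have hterm : ∀ j, (beta i j + beta j i) * (labelGap m t *
      (2 * ∑ τ ∈ Icc 1 k, labelGap m τ * (1 - 2 * x τ j) - labelGap m t * (1 - 2 * x t j))) =
      labelGap m t * ((beta i j + beta j i) * (2 * labelSum m (t - 1)
        + 2 * labelGap m t * x t j + 2 * ∑ τ ∈ Icc 1 k, labelGap m τ * (1 - 2 * x τ j)
        - ((m k : ℝ) - m 0)))
      + (beta i j + beta j i) * (labelGap m t * ((m k : ℝ) - m 0 - labelGap m t)
        - 2 * labelGap m t * labelSum m (t - 1)) := fun j => by ring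
  rw [sum_congr rfl fun j _ => hterm j, flipGain]
  simp only [sum_add_distrib, ← mul_sum, ← sum_mul]
  ring

section Minimizer

variable {k : ℕ} {f : V → ℤ} {m : ℕ → ℤ} {lam : V → ℝ} {beta : V → V → ℝ} {q : ℕ → V → ℝ}
  (hmono : ∀ l, l < k → m l < m (l + 1)) (hdiag : ∀ i, beta i i = 0)
  (hqbool : ∀ l, 1 ≤ l → l ≤ k → IsBool (q l))
  (hqmin : ∀ q' : ℕ → V → ℝ, (∀ l, 1 ≤ l → l ≤ k → IsBool (q' l)) →
    Qpoly k f m lam beta q ≤ Qpoly k f m lam beta q')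
include hmono hdiag hqbool hqmin

theorem flipGain_nonneg_of_isMin {t : ℕ} (ht : t ∈ Icc 1 k) {i : V} (hq : q t i = 0) :
    0 ≤ flipGain k f m lam beta q i t := by
  have hdiff := Qpoly_setCoord_one_sub_setCoord_zero f m lam hdiag ht q i
  rw [← hq, setCoord_self] at hdiff
  have hle := hqmin _ (isBool_setCoord hqbool t i (Or.inr rfl))
  exact nonneg_of_mul_nonneg_right (hdiff ▸ sub_nonneg.mpr hle) (labelGap_pos hmono ht)

theorem flipGain_nonpos_of_isMin {t : ℕ} (ht : t ∈ Icc 1 k) {i : V} (hq : q t i = 1) :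
    flipGain k f m lam beta q i t ≤ 0 := by
  have hdiff := Qpoly_setCoord_one_sub_setCoord_zero f m lam hdiag ht q i
  rw [← hq, setCoord_self] at hdiff
  have hle := hqmin _ (isBool_setCoord hqbool t i (Or.inl rfl))
  exact nonpos_of_mul_nonpos_right (hdiff ▸ sub_nonpos.mpr hle) (labelGap_pos hmono ht)

end Minimizer

end

/-- Any Boolean collection minimizing Q is coordinatewise non-increasing. -/
theorem stmt16 {V : Type} [Fintype V] (k : ℕ) (f : V → ℤ) (lam : V → ℝ)
    (hlam : ∀ i, 0 < lam i) (beta : V → V → ℝ) (hbeta : ∀ i j, 0 ≤ beta i j)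
    (hdiag : ∀ i, beta i i = 0)
    (m : ℕ → ℤ) (hmono : ∀ l, l < k → m l < m (l + 1))
    (q : ℕ → V → ℝ) (hqbool : ∀ l, 1 ≤ l → l ≤ k → IsBool (q l))
    (hqmin : ∀ q' : ℕ → V → ℝ, (∀ l, 1 ≤ l → l ≤ k → IsBool (q' l)) →
      Qpoly k f m lam beta q ≤ Qpoly k f m lam beta q') :
    ∀ l l', 1 ≤ l → l ≤ l' → l' ≤ k → ∀ i, q l' i ≤ q l i := by
  classical
  intro l l' hl hll' hl'k i
  by_contra! hlt
  have hbool := hqbool l hl (by omega)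
  have hbool' := hqbool l' (by omega) hl'k
  obtain ⟨hql, hql'⟩ : q l i = 0 ∧ q l' i = 1 := by
    rcases hbool i with h | h <;> rcases hbool' i with h' | h' <;>
      first | exact ⟨h, h'⟩ | (rw [h, h'] at hlt; norm_num at hlt)
  have hll : l < l' := hll'.lt_of_ne (by rintro rfl; linarith)
  have hgain := flipGain_nonneg_of_isMin hmono hdiag hqbool hqmin
    (mem_Icc.mpr ⟨hl, by omega⟩) hql
  have hgain' := flipGain_nonpos_of_isMin hmono hdiag hqbool hqmin
    (mem_Icc.mpr ⟨by omega, hl'k⟩) hql'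
  have hlt_gain := flipGain_lt f (hlam i) hbeta hmono hl hll hl'k hbool.le_one hbool'.nonneg
  linarith
end
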